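/- arXiv:1706.08266 — 9 statements merged into one kernel-verified Lean document; each statement's English description precedes it below -/
import Mathlib

section
/- Let p and q be coprime integers with p > q > 1 and p ≤ 2q−1. Then the topological closure in ℝ of the span-set Span = {span(n) : n ∈ ℕ} equals ρ(W_{p/q}) = {ρ(w) : w labels a branch of T_{p/q} from 0}, and this set is the closed interval [ρ(minword(0)), ρ(maxword(0))]. -/
/-- `w` labels a branch of the base-p/q automaton with digit set `E` from state `n`:
there are states `s 0 = n, s 1, s 2, …` with `q·s(k+1) = p·s k + w k` and `w k ∈ E`. -/
def IsBranch (p q : ℕ) (E : Set ℤ) (n : ℕ) (w : ℕ → ℤ) : Prop :=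
  ∃ s : ℕ → ℕ, s 0 = n ∧ ∀ k : ℕ, (q : ℤ) * s (k + 1) = p * s k + w k ∧ w k ∈ E

/-- `u` (a word of length `ℓ`) labels a path from `n` to `m` in the base-p/q automaton
with digit set `E`. -/
def IsPath (p q : ℕ) (E : Set ℤ) (n m ℓ : ℕ) (u : ℕ → ℤ) : Prop :=
  ∃ s : ℕ → ℕ, s 0 = n ∧ s ℓ = m ∧
    ∀ k < ℓ, (q : ℤ) * s (k + 1) = p * s k + u k ∧ u k ∈ E

/-- The canonical digit alphabet `A_p = {0, 1, …, p−1}`. -/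
def Ap (p : ℕ) : Set ℤ := Set.Icc 0 ((p : ℤ) - 1)

/-- The lower alphabet `{0, 1, …, q−1}`. -/
def LowAlph (q : ℕ) : Set ℤ := Set.Icc 0 ((q : ℤ) - 1)

/-- The upper alphabet `{p−q, …, p−1}`. -/
def UpAlph (p q : ℕ) : Set ℤ := Set.Icc ((p : ℤ) - q) ((p : ℤ) - 1)

/-- The alphabet `D = {p−2q+1, …, p−1}` of the automaton `S_{p/q}`. -/
def Dalph (p q : ℕ) : Set ℤ := Set.Icc ((p : ℤ) - 2 * q + 1) ((p : ℤ) - 1)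

/-- Evaluation after the radix point: `ρ(w) = Σ_{i≥1} (w_i/q)·(q/p)^i`
(here `w k` is the `(k+1)`-st digit). -/
noncomputable def rho (p q : ℕ) (w : ℕ → ℤ) : ℝ :=
  ∑' i : ℕ, ((w i : ℝ) / q) * ((q : ℝ) / p) ^ (i + 1)

/-
Write `I n = [ρ(minword n), ρ(maxword n)]`. For any run `a` of the automaton on a bounded word `x`
(states in `ℤ` or `ℝ`), `ρ(x) + a 0` is the limit of `a N · (q/p)^N`; hence runs whose states stay
ordered have ordered values. This gives `span n ∈ I 0`, `ρ(W_{p/q}) ⊆ I 0`, and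
`ρ(minword (m+1)) + 1 ≤ ρ(maxword m)`.

Splitting off the first digit, `p · I n` is covered by the intervals `d + q · I n'` over the two
children `n'` of `n` along the minword and the maxword: for `p ≤ 2q - 1` these children are equal or
consecutive, and the inequality above closes the gap. Following this covering from any `y ∈ I 0`
produces a branch from `0` with value `y`, so `ρ(W_{p/q}) = I 0`.

Finally, given a branch `w` from `0` and `N`, put `v k = max 0 (p - q - w k)`, a low digit with
`v k + w k` an upper digit. By coprimality some state `n` has a path labelled `v` of length `N`;
adding the path of `w` shows that the maxword of `n` starts with `v + w`, so `span n` agrees with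
`ρ(w)` up to `O((q/p)^N)`, and `I 0` lies in the closure of the spans.
-/

open Finset Filter Topology

def IsRun {R : Type*} [Ring R] (p q : ℕ) (a : ℕ → R) (x : ℕ → ℤ) : Prop :=
  ∀ k, (q : R) * a (k + 1) = p * a k + x k

section Rho

variable {p q : ℕ}

lemma IsRun.cast {a x : ℕ → ℤ} (ha : IsRun p q a x) : IsRun p q (fun k => (a k : ℝ)) x :=
  fun k => by dsimp only; exact_mod_cast ha k

lemma IsRun.sub {R : Type*} [Ring R] {a b : ℕ → R} {x y : ℕ → ℤ} (ha : IsRun p q a x)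
    (hb : IsRun p q b y) : IsRun p q (a - b) (x - y) := fun k => by
  simp only [Pi.sub_apply, Int.cast_sub, mul_sub, ha k, hb k]
  abel

lemma summable_rho (hqp : q < p) {w : ℕ → ℤ} {B : ℝ} (hw : ∀ k, |(w k : ℝ)| ≤ B) :
    Summable fun i => ((w i : ℝ) / q) * ((q : ℝ) / p) ^ (i + 1) := by
  have hp : (0 : ℝ) < p := by exact_mod_cast (Nat.zero_le q).trans_lt hqp
  have hr : (q : ℝ) / p < 1 := (div_lt_one hp).2 (by exact_mod_cast hqp)
  refine .of_norm_bounded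
    ((summable_geometric_of_lt_one (by positivity) hr).mul_left (B / q * (q / p))) fun i => ?_
  rw [norm_mul, norm_div, norm_pow, Real.norm_natCast, Real.norm_eq_abs,
    Real.norm_of_nonneg (by positivity), pow_succ', ← mul_assoc]
  gcongr
  exact hw i

lemma sum_range_eq_of_isRun (hp : p ≠ 0) (hq : q ≠ 0) {a : ℕ → ℝ} {x : ℕ → ℤ}
    (ha : IsRun p q a x) (N : ℕ) :
    ∑ k ∈ range N, ((x k : ℝ) / q) * ((q : ℝ) / p) ^ (k + 1) = a N * ((q : ℝ) / p) ^ N - a 0 := by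
  have hp' : (p : ℝ) ≠ 0 := by exact_mod_cast hp
  have hq' : (q : ℝ) ≠ 0 := by exact_mod_cast hq
  have h := sum_range_sub (fun k => a k * ((q : ℝ) / p) ^ k) N
  rw [pow_zero, mul_one] at h
  rw [← h]
  refine sum_congr rfl fun k _ => ?_
  rw [show (x k : ℝ) = q * a (k + 1) - p * a k by linarith [ha k], pow_succ]
  field_simp

lemma IsRun.tendsto_mul_pow (hqp : q < p) (hq : 0 < q) {a : ℕ → ℝ} {x : ℕ → ℤ} {B : ℝ}
    (hx : ∀ k, |(x k : ℝ)| ≤ B) (ha : IsRun p q a x) :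
    Tendsto (fun N => a N * ((q : ℝ) / p) ^ N) atTop (𝓝 (rho p q x + a 0)) := by
  have hsum := ((summable_rho hqp hx).hasSum.tendsto_sum_nat).add_const (a 0)
  simp only [sum_range_eq_of_isRun (by omega) hq.ne' ha, sub_add_cancel] at hsum
  exact hsum

lemma tendsto_mul_pow_nhds_zero (hqp : q < p) {a : ℕ → ℝ} {M : ℝ} (hM : ∀ k, |a k| ≤ M) :
    Tendsto (fun N => a N * ((q : ℝ) / p) ^ N) atTop (𝓝 0) := by
  have hp : (0 : ℝ) < p := by exact_mod_cast (Nat.zero_le q).trans_lt hqp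
  have hr := tendsto_pow_atTop_nhds_zero_of_lt_one (by positivity : (0 : ℝ) ≤ q / p)
    ((div_lt_one hp).2 (by exact_mod_cast hqp))
  refine squeeze_zero_norm (fun N => ?_) (by simpa using hr.const_mul M)
  rw [norm_mul, norm_pow, Real.norm_of_nonneg (by positivity : (0 : ℝ) ≤ q / p)]
  exact mul_le_mul_of_nonneg_right (hM N) (by positivity)

lemma rho_eq_neg_of_isRun (hqp : q < p) (hq : 0 < q) {a : ℕ → ℝ} {x : ℕ → ℤ} {M : ℝ}
    (ha : IsRun p q a x) (hM : ∀ k, |a k| ≤ M) : rho p q x = -a 0 := by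
  have hx : ∀ k, |(x k : ℝ)| ≤ (q + p) * M := fun k => by
    rw [show (x k : ℝ) = q * a (k + 1) - p * a k by linarith [ha k]]
    calc |(q : ℝ) * a (k + 1) - p * a k| ≤ q * |a (k + 1)| + p * |a k| := by
          simpa [abs_mul] using abs_sub ((q : ℝ) * a (k + 1)) (p * a k)
      _ ≤ q * M + p * M := by gcongr <;> apply hM
      _ = (q + p) * M := by ring
  have := tendsto_nhds_unique (ha.tendsto_mul_pow hqp hq hx) (tendsto_mul_pow_nhds_zero hqp hM)
  linarith

lemma IsRun.le_add {a b x y : ℕ → ℤ} {c : ℤ} (ha : IsRun p q a x)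
    (hb : IsRun p q b y) (h0 : a 0 ≤ b 0 + c) (hxy : ∀ k, x k - y k ≤ q - 1 + c * (q - p))
    (k : ℕ) : a k ≤ b k + c := by
  induction k with
  | zero => exact h0
  | succ k ih =>
    have h1 : (q : ℤ) * a (k + 1) = p * a k + x k := ha k
    have h2 : (q : ℤ) * b (k + 1) = p * b k + y k := hb k
    have hlt : (q : ℤ) * (a (k + 1) - b (k + 1) - c) < q * 1 := by
      linarith [hxy k, mul_le_mul_of_nonneg_left ih (Int.natCast_nonneg p)]
    have := lt_of_mul_lt_mul_left hlt (Int.natCast_nonneg q)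
    omega

lemma rho_add_le_rho_add (hqp : q < p) (hq : 0 < q) {a b x y : ℕ → ℤ} {c : ℤ} {B : ℝ}
    (hx : ∀ k, |(x k : ℝ)| ≤ B) (hy : ∀ k, |(y k : ℝ)| ≤ B) (ha : IsRun p q a x)
    (hb : IsRun p q b y) (h0 : a 0 ≤ b 0 + c) (hxy : ∀ k, x k - y k ≤ q - 1 + c * (q - p)) :
    rho p q x + a 0 ≤ rho p q y + b 0 := by
  have hc := tendsto_mul_pow_nhds_zero hqp (a := fun _ => (c : ℝ)) fun _ => le_rfl
  have := le_of_tendsto_of_tendsto' (ha.cast.tendsto_mul_pow hqp hq hx)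
    ((hb.cast.tendsto_mul_pow hqp hq hy).add hc) fun N => ?_
  · simpa using this
  · rw [← add_mul]
    gcongr
    exact_mod_cast ha.le_add hb h0 hxy N

lemma rho_sub (hqp : q < p) {x y : ℕ → ℤ} {B : ℝ} (hx : ∀ k, |(x k : ℝ)| ≤ B)
    (hy : ∀ k, |(y k : ℝ)| ≤ B) : rho p q (x - y) = rho p q x - rho p q y := by
  simp only [rho, Pi.sub_apply, Int.cast_sub, sub_div, sub_mul]
  exact (summable_rho hqp hx).tsum_sub (summable_rho hqp hy)

lemma rho_eq_sum_add_rho_shift (hqp : q < p) {w : ℕ → ℤ} {B : ℝ} (hw : ∀ k, |(w k : ℝ)| ≤ B)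
    (N : ℕ) : rho p q w = ∑ i ∈ range N, ((w i : ℝ) / q) * ((q : ℝ) / p) ^ (i + 1)
      + ((q : ℝ) / p) ^ N * rho p q (fun k => w (k + N)) := by
  rw [rho, rho, ← (summable_rho hqp hw).sum_add_tsum_nat_add N, ← tsum_mul_left]
  congr 1
  refine tsum_congr fun i => ?_
  ring

lemma mul_rho_eq (hqp : q < p) (hq : 0 < q) {w : ℕ → ℤ} {B : ℝ} (hw : ∀ k, |(w k : ℝ)| ≤ B) :
    (p : ℝ) * rho p q w = w 0 + q * rho p q (fun k => w (k + 1)) := by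
  have hp : (p : ℝ) ≠ 0 := by exact_mod_cast (hq.trans hqp).ne'
  have hq' : (q : ℝ) ≠ 0 := by exact_mod_cast hq.ne'
  rw [rho_eq_sum_add_rho_shift hqp hw 1]
  simp only [range_one, sum_singleton, zero_add, pow_one]
  field_simp

lemma abs_rho_le (hqp : q < p) (hq : 0 < q) {w : ℕ → ℤ} {B : ℝ} (hw : ∀ k, |(w k : ℝ)| ≤ B) :
    |rho p q w| ≤ B / (p - q) := by
  have hp : (0 : ℝ) < p := by exact_mod_cast hq.trans hqp
  have hpq : (0 : ℝ) < p - q := by simp [hqp]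
  have hr : (q : ℝ) / p < 1 := (div_lt_one hp).2 (by exact_mod_cast hqp)
  have hgeom := (hasSum_geometric_of_lt_one (by positivity) hr).mul_left (B / q * (q / p))
  rw [show B / q * ((q : ℝ) / p) * (1 - (q : ℝ) / p)⁻¹ = B / (p - q) by field_simp] at hgeom
  rw [← Real.norm_eq_abs, rho]
  refine tsum_of_norm_bounded hgeom fun i => ?_
  rw [norm_mul, norm_div, norm_pow, Real.norm_natCast, Real.norm_eq_abs,
    Real.norm_of_nonneg (by positivity), pow_succ', ← mul_assoc]
  gcongr
  exact hw i

lemma abs_rho_sub_le (hqp : q < p) (hq : 0 < q) {x y : ℕ → ℤ} {B : ℝ}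
    (hx : ∀ k, |(x k : ℝ)| ≤ B) (hy : ∀ k, |(y k : ℝ)| ≤ B) {N : ℕ}
    (hxy : ∀ k < N, x k = y k) :
    |rho p q x - rho p q y| ≤ 2 * B / (p - q) * ((q : ℝ) / p) ^ N := by
  have hxy' : ∀ k, |((x - y) k : ℝ)| ≤ 2 * B := fun k => by
    simpa [two_mul] using (abs_sub _ _).trans (add_le_add (hx k) (hy k))
  rw [← rho_sub hqp hx hy, rho_eq_sum_add_rho_shift hqp hxy' N,
    sum_eq_zero fun i hi => by simp [hxy i (mem_range.1 hi)], zero_add, abs_mul,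
    abs_of_nonneg (by positivity), mul_comm]
  exact mul_le_mul_of_nonneg_right (abs_rho_le hqp hq fun k => hxy' (k + N)) (by positivity)

end Rho

section Automaton

variable {p q : ℕ}

lemma lowAlph_subset_ap (hqp : q ≤ p) : LowAlph q ⊆ Ap p := fun d hd => by
  simp only [LowAlph, Ap, Set.mem_Icc] at hd ⊢
  omega

lemma upAlph_subset_ap (hqp : q ≤ p) : UpAlph p q ⊆ Ap p := fun d hd => by
  simp only [UpAlph, Ap, Set.mem_Icc] at hd ⊢
  omega

lemma abs_sub_lt_of_mem_lowAlph {d d' : ℤ} (hd : d ∈ LowAlph q) (hd' : d' ∈ LowAlph q) :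
    |d - d'| < q := by
  simp only [LowAlph, Set.mem_Icc] at hd hd'
  rw [abs_sub_lt_iff]
  omega

lemma abs_sub_lt_of_mem_upAlph {d d' : ℤ} (hd : d ∈ UpAlph p q) (hd' : d' ∈ UpAlph p q) :
    |d - d'| < q := by
  simp only [UpAlph, Set.mem_Icc] at hd hd'
  rw [abs_sub_lt_iff]
  omega

variable {E : Set ℤ} {n : ℕ} {w : ℕ → ℤ}

lemma IsBranch.mem (h : IsBranch p q E n w) (k : ℕ) : w k ∈ E :=
  let ⟨_, _, hs⟩ := h; (hs k).2

lemma IsBranch.abs_le (h : IsBranch p q E n w) (hE : E ⊆ Ap p) (k : ℕ) : |(w k : ℝ)| ≤ p := by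
  have := hE (h.mem k)
  simp only [Ap, Set.mem_Icc] at this
  exact_mod_cast _root_.abs_le.2 ⟨by omega, by omega⟩

lemma IsBranch.exists_isRun (h : IsBranch p q E n w) :
    ∃ a : ℕ → ℤ, a 0 = n ∧ IsRun p q a w :=
  let ⟨s, hs0, hs⟩ := h; ⟨fun k => s k, by simp [hs0], fun k => (hs k).1⟩

lemma IsBranch.tail (h : IsBranch p q E n w) :
    ∃ n₁ : ℕ, (q : ℤ) * n₁ = p * n + w 0 ∧ IsBranch p q E n₁ fun k => w (k + 1) := by
  obtain ⟨s, rfl, hs⟩ := h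
  exact ⟨s 1, (hs 0).1, s ∘ Nat.succ, rfl, fun k => hs (k + 1)⟩

lemma IsBranch.eq (hE : ∀ d ∈ E, ∀ d' ∈ E, |d - d'| < q) {w' : ℕ → ℤ}
    (h : IsBranch p q E n w) (h' : IsBranch p q E n w') : w = w' := by
  obtain ⟨s, hs0, hs⟩ := h
  obtain ⟨s', hs0', hs'⟩ := h'
  have step : ∀ k, s k = s' k → w k = w' k ∧ s (k + 1) = s' (k + 1) := fun k hk => by
    have hdiff : (q : ℤ) * (s (k + 1) - s' (k + 1)) = w k - w' k := by
      rw [mul_sub, (hs k).1, (hs' k).1, hk]; ring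
    have hw : w k - w' k = 0 :=
      Int.eq_zero_of_abs_lt_dvd ⟨_, hdiff.symm⟩ (hE _ (hs k).2 _ (hs' k).2)
    refine ⟨by linarith, ?_⟩
    have hq : (q : ℤ) ≠ 0 := by have := hE _ (hs k).2 _ (hs k).2; simp at this; omega
    exact_mod_cast sub_eq_zero.1 ((mul_eq_zero.1 (hdiff.trans hw)).resolve_left hq)
  have hstates : ∀ k, s k = s' k := fun k => by
    induction k with
    | zero => rw [hs0, hs0']
    | succ k ih => exact (step k ih).2
  exact funext fun k => (step k (hstates k)).1

lemma exists_mul_rho_eq (hqp : q < p) (hq : 0 < q) (hE : E ⊆ Ap p)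
    (hdiam : ∀ d ∈ E, ∀ d' ∈ E, |d - d'| < q) {word : ℕ → ℕ → ℤ}
    (hword : ∀ n, IsBranch p q E n (word n)) (n : ℕ) :
    ∃ n₁ : ℕ, (q : ℤ) * n₁ = p * n + word n 0 ∧
      (p : ℝ) * rho p q (word n) = word n 0 + q * rho p q (word n₁) := by
  obtain ⟨n₁, hn₁, htail⟩ := (hword n).tail
  refine ⟨n₁, hn₁, ?_⟩
  rw [(hword n₁).eq hdiam htail]
  exact mul_rho_eq hqp hq ((hword n).abs_le hE)

end Automaton

section Values

variable {p q : ℕ}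

lemma IsBranch.rho_add_le {E E' : Set ℤ} {m n : ℕ} {x y : ℕ → ℤ} (hqp : q < p) (hq : 0 < q)
    (hx : IsBranch p q E m x) (hy : IsBranch p q E' n y) (hE : E ⊆ Ap p) (hE' : E' ⊆ Ap p)
    {c : ℤ} (h0 : (m : ℤ) ≤ n + c) (hxy : ∀ k, x k - y k ≤ q - 1 + c * (q - p)) :
    rho p q x + m ≤ rho p q y + n := by
  obtain ⟨a, ha0, ha⟩ := hx.exists_isRun
  obtain ⟨b, hb0, hb⟩ := hy.exists_isRun
  have := rho_add_le_rho_add hqp hq (hx.abs_le hE) (hy.abs_le hE') ha hb (by rwa [ha0, hb0]) hxy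
  simpa [ha0, hb0] using this

variable {mw mx : ℕ → ℕ → ℤ}

lemma rho_minword_le_rho_maxword (hqp : q < p) (hq : 0 < q)
    (hmw : ∀ n, IsBranch p q (LowAlph q) n (mw n)) (hmx : ∀ n, IsBranch p q (UpAlph p q) n (mx n))
    (n : ℕ) : rho p q (mw n) ≤ rho p q (mx n) := by
  have := (hmw n).rho_add_le hqp hq (hmx n) (lowAlph_subset_ap hqp.le) (upAlph_subset_ap hqp.le)
    (c := 0) (by simp) fun k => by
      have := (hmw n).mem k; have := (hmx n).mem k
      simp only [LowAlph, UpAlph, Set.mem_Icc] at *; omega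
  linarith

lemma rho_minword_succ_add_one_le (hqp : q < p) (hq : 0 < q)
    (hmw : ∀ n, IsBranch p q (LowAlph q) n (mw n)) (hmx : ∀ n, IsBranch p q (UpAlph p q) n (mx n))
    (n : ℕ) : rho p q (mw (n + 1)) + 1 ≤ rho p q (mx n) := by
  have := (hmw (n + 1)).rho_add_le hqp hq (hmx n) (lowAlph_subset_ap hqp.le)
    (upAlph_subset_ap hqp.le) (c := 1) (by simp) fun k => by
      have := (hmw (n + 1)).mem k; have := (hmx n).mem k
      simp only [LowAlph, UpAlph, Set.mem_Icc] at *; omega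
  push_cast at this
  linarith

lemma minword_zero (hq : 0 < q) (hmw : ∀ n, IsBranch p q (LowAlph q) n (mw n)) :
    mw 0 = 0 :=
  (hmw 0).eq (fun _ hd _ hd' => abs_sub_lt_of_mem_lowAlph hd hd')
    ⟨0, rfl, fun _ => ⟨by simp, by simp [LowAlph]; omega⟩⟩

lemma abs_maxword_sub_minword_le (hqp : q ≤ p) {m n : ℕ}
    (hmw : IsBranch p q (LowAlph q) n (mw n)) (hmx : IsBranch p q (UpAlph p q) m (mx m)) (k : ℕ) :
    |((mx m - mw n) k : ℝ)| ≤ p := by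
  have := hmw.mem k; have := hmx.mem k
  simp only [LowAlph, UpAlph, Set.mem_Icc, Pi.sub_apply] at *
  exact_mod_cast abs_le.2 ⟨by omega, by omega⟩

lemma rho_maxword_sub_rho_minword_mem_Icc (hqp : q < p) (hq : 0 < q)
    (hmw : ∀ n, IsBranch p q (LowAlph q) n (mw n)) (hmx : ∀ n, IsBranch p q (UpAlph p q) n (mx n))
    (n : ℕ) : rho p q (mx n) - rho p q (mw n) ∈ Set.Icc (rho p q (mw 0)) (rho p q (mx 0)) := by
  refine ⟨?_, ?_⟩
  · rw [minword_zero hq hmw]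
    simpa [rho] using rho_minword_le_rho_maxword hqp hq hmw hmx n
  obtain ⟨a, ha0, ha⟩ := (hmx n).exists_isRun
  obtain ⟨b, hb0, hb⟩ := (hmw n).exists_isRun
  obtain ⟨c, hc0, hc⟩ := (hmx 0).exists_isRun
  have hx := (hmx n).abs_le (upAlph_subset_ap hqp.le)
  have hy := (hmw n).abs_le (lowAlph_subset_ap hqp.le)
  have := rho_add_le_rho_add hqp hq (abs_maxword_sub_minword_le hqp.le (hmw n) (hmx n))
    ((hmx 0).abs_le (upAlph_subset_ap hqp.le)) (ha.sub hb) hc (c := 0) (by simp [ha0, hb0, hc0])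
    fun k => by
      have := (hmw n).mem k; have := (hmx n).mem k; have := (hmx 0).mem k
      simp only [LowAlph, UpAlph, Set.mem_Icc, Pi.sub_apply] at *; omega
  rw [rho_sub hqp hx hy] at this
  simpa [ha0, hb0, hc0] using this

lemma rho_mem_Icc_of_isBranch (hqp : q < p) (hq : 0 < q)
    (hmw : ∀ n, IsBranch p q (LowAlph q) n (mw n)) (hmx : ∀ n, IsBranch p q (UpAlph p q) n (mx n))
    {w : ℕ → ℤ} (hw : IsBranch p q (Ap p) 0 w) :
    rho p q w ∈ Set.Icc (rho p q (mw 0)) (rho p q (mx 0)) := by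
  have hlow := (hmw 0).rho_add_le hqp hq hw (lowAlph_subset_ap hqp.le) subset_rfl (c := 0)
    (by simp) fun k => by
      have := (hmw 0).mem k; have := hw.mem k
      simp only [LowAlph, Ap, Set.mem_Icc] at *; omega
  have hup := hw.rho_add_le hqp hq (hmx 0) subset_rfl (upAlph_subset_ap hqp.le) (c := 0)
    (by simp) fun k => by
      have := hw.mem k; have := (hmx 0).mem k
      simp only [UpAlph, Ap, Set.mem_Icc] at *; omega
  exact ⟨by simpa using hlow, by simpa using hup⟩

end Values

section Covering

variable {p q : ℕ}

lemma exists_isBranch_rho_eq_of_covering {E : Set ℤ} (hqp : q < p) (hq : 0 < q)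
    {I : ℕ → Set ℝ} {M : ℝ} (hI : ∀ n, ∀ y ∈ I n, |y| ≤ M)
    (hstep : ∀ n, ∀ y ∈ I n, ∃ d ∈ E, ∃ n' : ℕ, (q : ℤ) * n' = p * n + d ∧
      ∃ y' ∈ I n', (p : ℝ) * y = d + q * y')
    {n : ℕ} {y : ℝ} (hy : y ∈ I n) : ∃ w, IsBranch p q E n w ∧ rho p q w = y := by
  choose! D hD N' hN' Y hY hpY using hstep
  let z : ℕ → ℕ × ℝ := fun k => Nat.rec (n, y) (fun _ z => (N' z.1 z.2, Y z.1 z.2)) k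
  have hz : ∀ k, (z k).2 ∈ I (z k).1 := fun k => by
    induction k with
    | zero => exact hy
    | succ k ih => exact hY _ _ ih
  refine ⟨fun k => D (z k).1 (z k).2, ⟨fun k => (z k).1, rfl, fun k =>
    ⟨hN' _ _ (hz k), hD _ _ (hz k)⟩⟩, ?_⟩
  have hrun : IsRun p q (fun k => -(z k).2) fun k => D (z k).1 (z k).2 := fun k => by
    linarith [hpY _ _ (hz k)]
  exact (rho_eq_neg_of_isRun hqp hq hrun fun k => by simpa using hI _ _ (hz k)).trans (neg_neg y)

lemma lowAlph_upAlph_step_cases (hqp : q < p) (hsmall : p ≤ 2 * q - 1) {n nl nh : ℕ} {dl dh : ℤ}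
    (hdl : dl ∈ LowAlph q) (hdh : dh ∈ UpAlph p q) (hnl : (q : ℤ) * nl = p * n + dl)
    (hnh : (q : ℤ) * nh = p * n + dh) : (dh = dl ∧ nh = nl) ∨ (dh = dl + q ∧ nh = nl + 1) := by
  simp only [LowAlph, UpAlph, Set.mem_Icc] at hdl hdh
  have hdiff : (q : ℤ) * ((nh : ℤ) - nl) = dh - dl := by linarith
  have hpq : (q : ℤ) < p ∧ (p : ℤ) ≤ 2 * q - 1 := by omega
  have h1 : (nh : ℤ) - nl < 2 := by
    by_contra! h
    nlinarith [mul_le_mul_of_nonneg_left h (Int.natCast_nonneg q)]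
  have h2 : 0 ≤ (nh : ℤ) - nl := by
    by_contra! h
    nlinarith [mul_le_mul_of_nonneg_left (show (nh : ℤ) - nl ≤ -1 by omega) (Int.natCast_nonneg q)]
  rcases (show (nh : ℤ) - nl = 0 ∨ (nh : ℤ) - nl = 1 by omega) with h | h
  · left; rw [h, mul_zero] at hdiff; omega
  · right; rw [h, mul_one] at hdiff; omega

variable {mw mx : ℕ → ℕ → ℤ}

lemma exists_digit_step_mem_Icc (hqp : q < p) (hq : 0 < q) (hsmall : p ≤ 2 * q - 1)
    (hmw : ∀ n, IsBranch p q (LowAlph q) n (mw n)) (hmx : ∀ n, IsBranch p q (UpAlph p q) n (mx n))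
    (n : ℕ) (y : ℝ) (hy : y ∈ Set.Icc (rho p q (mw n)) (rho p q (mx n))) :
    ∃ d ∈ Ap p, ∃ n' : ℕ, (q : ℤ) * n' = p * n + d ∧
      ∃ y' ∈ Set.Icc (rho p q (mw n')) (rho p q (mx n')), (p : ℝ) * y = d + q * y' := by
  have hqR : (0 : ℝ) < q := by exact_mod_cast hq
  obtain ⟨nl, hnl, hl⟩ := exists_mul_rho_eq hqp hq (lowAlph_subset_ap hqp.le)
    (fun _ hd _ hd' => abs_sub_lt_of_mem_lowAlph hd hd') hmw n
  obtain ⟨nh, hnh, hh⟩ := exists_mul_rho_eq hqp hq (upAlph_subset_ap hqp.le)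
    (fun _ hd _ hd' => abs_sub_lt_of_mem_upAlph hd hd') hmx n
  have hoverlap : (mx n 0 : ℝ) + q * rho p q (mw nh) ≤ mw n 0 + q * rho p q (mx nl) := by
    rcases lowAlph_upAlph_step_cases hqp hsmall ((hmw n).mem 0) ((hmx n).mem 0) hnl hnh with
      ⟨hd, rfl⟩ | ⟨hd, rfl⟩
    · rw [hd]
      gcongr
      exact rho_minword_le_rho_maxword hqp hq hmw hmx nh
    · rw [hd]
      push_cast
      nlinarith [rho_minword_succ_add_one_le hqp hq hmw hmx nl]
  by_cases h : (p : ℝ) * y ≤ mw n 0 + q * rho p q (mx nl)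
  · refine ⟨mw n 0, lowAlph_subset_ap hqp.le ((hmw n).mem 0), nl, hnl, (p * y - mw n 0) / q,
      ⟨?_, ?_⟩, by field_simp; ring⟩
    · rw [le_div_iff₀ hqR]
      nlinarith [hy.1]
    · rw [div_le_iff₀ hqR]
      linarith
  · refine ⟨mx n 0, upAlph_subset_ap hqp.le ((hmx n).mem 0), nh, hnh, (p * y - mx n 0) / q,
      ⟨?_, ?_⟩, by field_simp; ring⟩
    · rw [le_div_iff₀ hqR]
      linarith
    · rw [div_le_iff₀ hqR]
      nlinarith [hy.2]

lemma exists_isBranch_rho_eq (hqp : q < p) (hq : 0 < q) (hsmall : p ≤ 2 * q - 1)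
    (hmw : ∀ n, IsBranch p q (LowAlph q) n (mw n)) (hmx : ∀ n, IsBranch p q (UpAlph p q) n (mx n))
    {y : ℝ} (hy : y ∈ Set.Icc (rho p q (mw 0)) (rho p q (mx 0))) :
    ∃ w, IsBranch p q (Ap p) 0 w ∧ rho p q w = y :=
  exists_isBranch_rho_eq_of_covering hqp hq (M := p / (p - q))
    (fun n _ hy => (abs_le_max_abs_abs hy.1 hy.2).trans
      (max_le (abs_rho_le hqp hq ((hmw n).abs_le (lowAlph_subset_ap hqp.le)))
        (abs_rho_le hqp hq ((hmx n).abs_le (upAlph_subset_ap hqp.le)))))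
    (exists_digit_step_mem_Icc hqp hq hsmall hmw hmx) hy

end Covering

def concatWord (ℓ : ℕ) (u w : ℕ → ℤ) : ℕ → ℤ := fun k => if k < ℓ then u k else w (k - ℓ)

section Paths

variable {p q : ℕ} {E : Set ℤ}

lemma IsPath.cons {n n' m ℓ : ℕ} {u : ℕ → ℤ} (h : IsPath p q E n' m ℓ fun k => u (k + 1))
    (hu : u 0 ∈ E) (hstep : (q : ℤ) * n' = p * n + u 0) : IsPath p q E n m (ℓ + 1) u := by
  obtain ⟨s, rfl, hsℓ, hs⟩ := h
  refine ⟨fun | 0 => n | k + 1 => s k, rfl, hsℓ, fun k hk => ?_⟩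
  cases k with
  | zero => exact ⟨hstep, hu⟩
  | succ k => exact hs k (by omega)

lemma IsPath.add {F G : Set ℤ} {n m n' m' ℓ : ℕ} {u v : ℕ → ℤ} (h : IsPath p q E n m ℓ u)
    (h' : IsPath p q F n' m' ℓ v) (huv : ∀ k < ℓ, u k + v k ∈ G) :
    IsPath p q G (n + n') (m + m') ℓ (u + v) := by
  obtain ⟨s, rfl, rfl, hs⟩ := h
  obtain ⟨s', rfl, rfl, hs'⟩ := h'
  refine ⟨s + s', rfl, rfl, fun k hk => ⟨?_, huv k hk⟩⟩
  simp only [Pi.add_apply, Nat.cast_add]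
  linarith [(hs k hk).1, (hs' k hk).1]

lemma IsPath.concat {n m ℓ : ℕ} {u w : ℕ → ℤ} (h : IsPath p q E n m ℓ u)
    (h' : IsBranch p q E m w) : IsBranch p q E n (concatWord ℓ u w) := by
  obtain ⟨s, hs0, hsℓ, hs⟩ := h
  obtain ⟨s', hs'0, hs'⟩ := h'
  refine ⟨fun k => if k < ℓ then s k else s' (k - ℓ), ?_, fun k => ?_⟩
  · rcases Nat.eq_zero_or_pos ℓ with rfl | hℓ
    · simp [hs'0, ← hsℓ, hs0]
    · simp [hℓ, hs0]
  rcases lt_trichotomy (k + 1) ℓ with hk | hk | hk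
  · simpa [concatWord, hk, (Nat.lt_succ_self k).trans hk] using hs k (by omega)
  · subst hk
    simpa [concatWord, hs'0, ← hsℓ] using hs k (Nat.lt_succ_self k)
  · have := hs' (k - ℓ)
    simpa [concatWord, show ¬ k < ℓ by omega, show ¬ k + 1 < ℓ by omega,
      show k + 1 - ℓ = k - ℓ + 1 by omega] using this

lemma IsBranch.exists_isPath {n : ℕ} {w : ℕ → ℤ} (h : IsBranch p q E n w) (ℓ : ℕ) :
    ∃ m, IsPath p q E n m ℓ w :=
  let ⟨s, hs0, hs⟩ := h; ⟨s ℓ, s, hs0, rfl, fun k _ => hs k⟩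

lemma exists_nat_mul_eq_add_mul {a b : ℕ} (hab : Nat.Coprime a b) (ha : 0 < a) (hb : 0 < b)
    (t : ℤ) : ∃ c j : ℕ, (a : ℤ) * c = t + j * b := by
  obtain ⟨u, v, huv⟩ := Nat.isCoprime_iff_coprime.2 hab
  set K := |t * u| + |t * v|
  have hK : K ≤ K * b ∧ K ≤ K * a := ⟨le_mul_of_one_le_right (by positivity) (by omega),
    le_mul_of_one_le_right (by positivity) (by omega)⟩
  refine ⟨(t * u + K * b).toNat, (K * a - t * v).toNat, ?_⟩
  rw [Int.toNat_of_nonneg (by linarith [neg_abs_le (t * u), abs_nonneg (t * v)]),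
    Int.toNat_of_nonneg (by linarith [le_abs_self (t * v), abs_nonneg (t * u)])]
  linear_combination t * huv

/- Prepending a step to a path requires a start state in a prescribed residue class modulo `p`,
which is why the statement is made for a whole progression of start states. -/
lemma exists_isPath_add_mul_pow (hco : Nat.Coprime p q) (hp : 0 < p) (hq : 0 < q)
    {v : ℕ → ℤ} (hv : ∀ k, v k ∈ E) (N : ℕ) :
    ∃ n : ℕ, ∀ j : ℕ, ∃ m, IsPath p q E (n + j * q ^ N) m N v := by
  induction N generalizing v with
  | zero => exact ⟨0, fun j => ⟨j, fun _ => j, by simp, rfl, by simp⟩⟩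
  | succ N ih =>
    obtain ⟨n₁, hn₁⟩ := ih fun k => hv (k + 1)
    obtain ⟨c, j₀, hc⟩ :=
      exists_nat_mul_eq_add_mul (hco.pow_right (N + 1)) hp (pow_pos hq _) (q * n₁ - v 0)
    refine ⟨c, fun j => ?_⟩
    obtain ⟨m, hm⟩ := hn₁ (j₀ + j * p)
    refine ⟨m, hm.cons (hv 0) ?_⟩
    push_cast at hc ⊢
    linear_combination -hc

end Paths

section Span

variable {p q : ℕ} {mw mx : ℕ → ℕ → ℤ}

lemma exists_maxword_sub_minword_eq (hco : Nat.Coprime p q) (hqp : q < p) (hq : 0 < q)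
    (hsmall : p ≤ 2 * q - 1) (hmw : ∀ n, IsBranch p q (LowAlph q) n (mw n))
    (hmx : ∀ n, IsBranch p q (UpAlph p q) n (mx n)) {w : ℕ → ℤ} (hw : IsBranch p q (Ap p) 0 w)
    (N : ℕ) : ∃ n, ∀ k < N, mx n k - mw n k = w k := by
  set v : ℕ → ℤ := fun k => max 0 (p - q - w k)
  have hv : ∀ k, v k ∈ LowAlph q ∧ v k + w k ∈ UpAlph p q := fun k => by
    have := hw.mem k
    simp only [v, LowAlph, UpAlph, Ap, Set.mem_Icc] at *
    omega
  obtain ⟨n, hn⟩ := exists_isPath_add_mul_pow hco (hq.trans hqp) hq (fun k => (hv k).1) N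
  obtain ⟨m, hm⟩ := hn 0
  rw [zero_mul, add_zero] at hm
  obtain ⟨m', hm'⟩ := hw.exists_isPath N
  have hlow : mw n = concatWord N v (mw m) :=
    (hmw n).eq (fun _ hd _ hd' => abs_sub_lt_of_mem_lowAlph hd hd') (hm.concat (hmw m))
  have hup : mx n = concatWord N (v + w) (mx (m + m')) :=
    (hmx n).eq (fun _ hd _ hd' => abs_sub_lt_of_mem_upAlph hd hd')
      ((hm.add hm' fun k _ => (hv k).2).concat (hmx _))
  exact ⟨n, fun k hk => by simp [hlow, hup, concatWord, hk]⟩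

lemma rho_mem_closure_span (hco : Nat.Coprime p q) (hqp : q < p) (hq : 0 < q)
    (hsmall : p ≤ 2 * q - 1) (hmw : ∀ n, IsBranch p q (LowAlph q) n (mw n))
    (hmx : ∀ n, IsBranch p q (UpAlph p q) n (mx n)) {w : ℕ → ℤ} (hw : IsBranch p q (Ap p) 0 w) :
    rho p q w ∈ closure {x : ℝ | ∃ n : ℕ, x = rho p q (mx n) - rho p q (mw n)} := by
  choose n hn using exists_maxword_sub_minword_eq hco hqp hq hsmall hmw hmx hw
  have hlim := tendsto_mul_pow_nhds_zero hqp (a := fun _ => 2 * (p : ℝ) / (p - q))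
    (M := |2 * (p : ℝ) / (p - q)|) fun _ => le_rfl
  refine mem_closure_of_tendsto (f := fun N => rho p q (mx (n N)) - rho p q (mw (n N)))
    (tendsto_iff_dist_tendsto_zero.2 (squeeze_zero (fun _ => dist_nonneg) (fun N => ?_) hlim))
    (Eventually.of_forall fun N => ⟨n N, rfl⟩)
  rw [Real.dist_eq, ← rho_sub hqp ((hmx _).abs_le (upAlph_subset_ap hqp.le))
    ((hmw _).abs_le (lowAlph_subset_ap hqp.le))]
  exact abs_rho_sub_le hqp hq (abs_maxword_sub_minword_le hqp.le (hmw _) (hmx _))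
    (hw.abs_le subset_rfl) (hn N)

end Span

theorem stmt0_general (p q : ℕ) (hco : Nat.Coprime p q) (hpq : q < p)
    (hsmall : p ≤ 2 * q - 1)
    (mw mx : ℕ → ℕ → ℤ)
    (hmw : ∀ n, IsBranch p q (LowAlph q) n (mw n))
    (hmx : ∀ n, IsBranch p q (UpAlph p q) n (mx n)) :
    closure {x : ℝ | ∃ n : ℕ, x = rho p q (mx n) - rho p q (mw n)}
      = {x : ℝ | ∃ w : ℕ → ℤ, IsBranch p q (Ap p) 0 w ∧ x = rho p q w} ∧
    closure {x : ℝ | ∃ n : ℕ, x = rho p q (mx n) - rho p q (mw n)}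
      = Set.Icc (rho p q (mw 0)) (rho p q (mx 0)) := by
  have hq : 0 < q := by omega
  have hW : {x : ℝ | ∃ w : ℕ → ℤ, IsBranch p q (Ap p) 0 w ∧ x = rho p q w}
      = Set.Icc (rho p q (mw 0)) (rho p q (mx 0)) := by
    refine Set.Subset.antisymm ?_ fun y hy => ?_
    · rintro _ ⟨w, hw, rfl⟩
      exact rho_mem_Icc_of_isBranch hpq hq hmw hmx hw
    · obtain ⟨w, hw, rfl⟩ := exists_isBranch_rho_eq hpq hq hsmall hmw hmx hy
      exact ⟨w, hw, rfl⟩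
  have hspan : closure {x : ℝ | ∃ n : ℕ, x = rho p q (mx n) - rho p q (mw n)}
      = Set.Icc (rho p q (mw 0)) (rho p q (mx 0)) := by
    refine Set.Subset.antisymm (closure_minimal ?_ isClosed_Icc) ?_
    · rintro _ ⟨n, rfl⟩
      exact rho_maxword_sub_rho_minword_mem_Icc hpq hq hmw hmx n
    · rw [← hW]
      rintro _ ⟨w, hw, rfl⟩
      exact rho_mem_closure_span hco hpq hq hsmall hmw hmx hw
  exact ⟨hspan.trans hW.symm, hspan⟩

theorem stmt0 (p q : ℕ) (hco : Nat.Coprime p q) (hq : 1 < q) (hpq : q < p)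
    (hsmall : p ≤ 2 * q - 1)
    (mw mx : ℕ → ℕ → ℤ)
    (hmw : ∀ n, IsBranch p q (LowAlph q) n (mw n))
    (hmx : ∀ n, IsBranch p q (UpAlph p q) n (mx n)) :
    closure {x : ℝ | ∃ n : ℕ, x = rho p q (mx n) - rho p q (mw n)}
      = {x : ℝ | ∃ w : ℕ → ℤ, IsBranch p q (Ap p) 0 w ∧ x = rho p q w} ∧
    closure {x : ℝ | ∃ n : ℕ, x = rho p q (mx n) - rho p q (mw n)}
      = Set.Icc (rho p q (mw 0)) (rho p q (mx 0)) :=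
  stmt0_general p q hco hpq hsmall mw mx hmw hmx
end

section
/- Let p and q be coprime integers with p > q > 1 and p > 2q−1. Then the topological closure in ℝ of the span-set Span = {span(n) : n ∈ ℕ} has Lebesgue measure zero. -/
/-!
The span of `n` is `ρ(d)` for the difference `d = maxword(n) − minword(n)`, which labels a branch
from `0` with integer states `t` (`q·t' = p·t + d`) and digits in `D = {p−2q+1, …, p−1}`. Since
`D` has `2q − 1` elements, at most two digits of `D` are congruent to `−p·t` mod `q`, so the
branches are driven by a single bit per step and the first `k` digits of `d` depend on `k` bits
only. The tail beyond the `k`-th digit contributes at most a constant times `(q/p)^k`, so the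
span set is covered by `2^k` intervals of length `C (q/p)^k`; this tends to `0` as `2q < p`.
-/

open MeasureTheory Filter Topology Set

namespace SpanSet

theorem volume_closure_eq_zero_of_forall_cover {S : Set ℝ} {ι : ℕ → Type*}
    [∀ k, Fintype (ι k)] (ℓ : ℕ → ℝ)
    (hℓ : Tendsto (fun k => (Fintype.card (ι k) : ℝ) * ℓ k) atTop (𝓝 0))
    (hS : ∀ k, ∃ a : ι k → ℝ, S ⊆ ⋃ i, Icc (a i) (a i + ℓ k)) :
    volume (closure S) = 0 := by
  have hle : ∀ k, volume (closure S) ≤ ENNReal.ofReal (Fintype.card (ι k) * ℓ k) := by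
    intro k
    obtain ⟨a, ha⟩ := hS k
    calc volume (closure S) ≤ volume (⋃ i, Icc (a i) (a i + ℓ k)) :=
          measure_mono (closure_minimal ha (isClosed_iUnion_of_finite fun _ => isClosed_Icc))
      _ ≤ ∑ i, volume (Icc (a i) (a i + ℓ k)) := measure_iUnion_fintype_le _ _
      _ = ENNReal.ofReal (Fintype.card (ι k) * ℓ k) := by
          simp [Real.volume_Icc, ENNReal.ofReal_mul]
  have hlim := ENNReal.tendsto_ofReal hℓ
  rw [ENNReal.ofReal_zero] at hlim
  exact le_zero_iff.mp (ge_of_tendsto' hlim hle)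

theorem two_mul_lt_of_coprime {p q : ℕ} (hco : Nat.Coprime p q) (hq : 1 < q)
    (hbig : 2 * q - 1 < p) : 2 * q < p := by
  have hne : p ≠ 2 * q := by
    rintro rfl
    have := (Nat.coprime_comm.mp hco).eq_one_of_dvd (dvd_mul_left q 2)
    omega
  omega

section Series

variable {p q : ℕ}

theorem hasSum_mul_geometric_succ {r : ℝ} (c : ℝ) (h0 : 0 ≤ r) (h1 : r < 1) :
    HasSum (fun i : ℕ => c * r ^ (i + 1)) (c * r / (1 - r)) := by
  rw [div_eq_mul_inv]
  refine ((hasSum_geometric_of_lt_one h0 h1).mul_left (c * r)).congr_fun fun i => ?_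
  ring

theorem summable_rho_term (hqp : q < p) {w : ℕ → ℤ} {a b : ℤ}
    (hw : ∀ i, w i ∈ Icc a b) :
    Summable fun i : ℕ => ((w i : ℝ) / q) * ((q : ℝ) / p) ^ (i + 1) := by
  have hp : (0 : ℝ) < p := by exact_mod_cast (Nat.zero_le q).trans_lt hqp
  have h0 : 0 ≤ (q : ℝ) / p := by positivity
  have h1 : (q : ℝ) / p < 1 := (div_lt_one hp).2 (by exact_mod_cast hqp)
  set C : ℝ := max |(a : ℝ)| |(b : ℝ)|
  refine Summable.of_norm_bounded (hasSum_mul_geometric_succ (C / q) h0 h1).summable fun i => ?_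
  have hC : |(w i : ℝ)| ≤ C :=
    abs_le_max_abs_abs (by exact_mod_cast (hw i).1) (by exact_mod_cast (hw i).2)
  rw [norm_mul, norm_div, norm_pow, Real.norm_eq_abs, Real.norm_eq_abs, Real.norm_eq_abs,
    abs_of_nonneg h0, Nat.abs_cast]
  gcongr

theorem rho_mem_Icc (hq : 0 < q) (hqp : q < p) {w : ℕ → ℤ} {a b : ℤ}
    (hw : ∀ i, w i ∈ Icc a b) :
    rho p q w ∈ Icc ((a : ℝ) / (p - q)) ((b : ℝ) / (p - q)) := by
  have hp : (0 : ℝ) < p := by exact_mod_cast hq.trans hqp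
  have h0 : 0 ≤ (q : ℝ) / p := by positivity
  have h1 : (q : ℝ) / p < 1 := (div_lt_one hp).2 (by exact_mod_cast hqp)
  have hgeom : ∀ c : ℤ, (c : ℝ) / q * ((q : ℝ) / p) / (1 - q / p) = c / (p - q) := by
    have : (p : ℝ) - q ≠ 0 := sub_ne_zero.2 (by exact_mod_cast hqp.ne')
    intro c
    rw [one_sub_div hp.ne']
    field_simp
  have hw' := (summable_rho_term hqp hw).hasSum
  constructor
  · rw [← hgeom]
    refine hasSum_le (fun i => ?_) (hasSum_mul_geometric_succ _ h0 h1) hw'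
    gcongr; exact_mod_cast (hw i).1
  · rw [← hgeom]
    refine hasSum_le (fun i => ?_) hw' (hasSum_mul_geometric_succ _ h0 h1)
    gcongr; exact_mod_cast (hw i).2

theorem rho_eq_sum_add_tail (hqp : q < p) {w : ℕ → ℤ} {a b : ℤ}
    (hw : ∀ i, w i ∈ Icc a b) (k : ℕ) :
    rho p q w = ∑ i ∈ Finset.range k, ((w i : ℝ) / q) * ((q : ℝ) / p) ^ (i + 1) +
      ((q : ℝ) / p) ^ k * rho p q (fun i => w (i + k)) := by
  rw [rho, ← (summable_rho_term hqp hw).sum_add_tsum_nat_add k, rho, ← tsum_mul_left]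
  congr 1
  refine tsum_congr fun i => ?_
  ring

theorem rho_sub (hqp : q < p) {x y : ℕ → ℤ} {a b c d : ℤ}
    (hx : ∀ i, x i ∈ Icc a b) (hy : ∀ i, y i ∈ Icc c d) :
    rho p q (x - y) = rho p q x - rho p q y := by
  rw [rho, rho, rho, ← (summable_rho_term hqp hx).tsum_sub (summable_rho_term hqp hy)]
  refine tsum_congr fun i => ?_
  rw [Pi.sub_apply, Int.cast_sub]
  ring

end Series

section BitAutomaton

variable (p q : ℕ)

/-- The least digit of `D = {p−2q+1, …}` congruent to `−p·t` modulo `q`. -/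
def minDigit (t : ℤ) : ℤ :=
  ((p : ℤ) - 2 * q + 1) + (-(p * t) - ((p : ℤ) - 2 * q + 1)) % q

def bitDigit (t : ℤ) (b : Bool) : ℤ := minDigit p q t + (if b then (q : ℤ) else 0)

def bitState (b : ℕ → Bool) : ℕ → ℤ
  | 0 => 0
  | i + 1 => (p * bitState b i + bitDigit p q (bitState b i) (b i)) / q

def bitWord (b : ℕ → Bool) (i : ℕ) : ℤ := bitDigit p q (bitState p q b i) (b i)

/-- Branches from `0` of the automaton `S_{p/q}`, whose states range over `ℤ`. -/
def IsIntBranch (E : Set ℤ) (w : ℕ → ℤ) : Prop :=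
  ∃ t : ℕ → ℤ, t 0 = 0 ∧ ∀ k, (q : ℤ) * t (k + 1) = p * t k + w k ∧ w k ∈ E

variable {p q}

theorem dvd_mul_add_bitDigit (t : ℤ) (b : Bool) : (q : ℤ) ∣ p * t + bitDigit p q t b := by
  have hmin : (q : ℤ) ∣ p * t + minDigit p q t :=
    ⟨-((-(p * t) - ((p : ℤ) - 2 * q + 1)) / q), by
      rw [minDigit, Int.emod_def]; ring⟩
  cases b
  · simpa [bitDigit] using hmin
  · simpa [bitDigit, ← add_assoc] using hmin.add (dvd_refl (q : ℤ))

theorem minDigit_mem (hq : 0 < q) (t : ℤ) :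
    minDigit p q t ∈ Icc ((p : ℤ) - 2 * q + 1) (p - q) := by
  have hq' : (0 : ℤ) < q := by exact_mod_cast hq
  have h0 := Int.emod_nonneg (-(p * t) - ((p : ℤ) - 2 * q + 1)) hq'.ne'
  have h1 := Int.emod_lt_of_pos (-(p * t) - ((p : ℤ) - 2 * q + 1)) hq'
  constructor <;> unfold minDigit <;> linarith

theorem bitWord_mem (hq : 0 < q) (b : ℕ → Bool) (i : ℕ) :
    bitWord p q b i ∈ Icc ((p : ℤ) - 2 * q + 1) p := by
  obtain ⟨h0, h1⟩ := minDigit_mem (p := p) hq (bitState p q b i)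
  unfold bitWord bitDigit
  constructor <;> split <;> omega

theorem bitState_congr {b b' : ℕ → Bool} {i : ℕ} (h : ∀ j < i, b j = b' j) :
    bitState p q b i = bitState p q b' i := by
  induction i with
  | zero => rfl
  | succ i ih =>
    simp only [bitState, ih fun j hj => h j (Nat.lt_succ_of_lt hj), h i (Nat.lt_succ_self i)]

theorem bitWord_congr {b b' : ℕ → Bool} {i : ℕ} (h : ∀ j ≤ i, b j = b' j) :
    bitWord p q b i = bitWord p q b' i := by
  rw [bitWord, bitWord, bitState_congr fun j hj => h j hj.le, h i le_rfl]

/-- Since `D` has `2q − 1` elements, a residue class mod `q` meets it in at most two digits. -/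
theorem exists_bitDigit_eq (hq : 0 < q) {t d : ℤ} (hdvd : (q : ℤ) ∣ p * t + d)
    (hd : d ∈ Dalph p q) : ∃ b, bitDigit p q t b = d := by
  obtain ⟨c, hc⟩ : (q : ℤ) ∣ d - minDigit p q t := by
    simpa [bitDigit] using dvd_sub hdvd (dvd_mul_add_bitDigit (p := p) t false)
  obtain ⟨hm0, hm1⟩ := minDigit_mem (p := p) hq t
  obtain ⟨hd0, hd1⟩ := hd
  have hq' : (0 : ℤ) < q := by exact_mod_cast hq
  have hc0 : 0 ≤ c := by nlinarith
  have hc1 : c ≤ 1 := by nlinarith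
  obtain rfl | rfl : c = 0 ∨ c = 1 := by omega
  · exact ⟨false, by simp [bitDigit]; linarith⟩
  · exact ⟨true, by simp [bitDigit]; linarith⟩

theorem exists_bitWord_eq (hq : 0 < q) {d : ℕ → ℤ} (hd : IsIntBranch p q (Dalph p q) d) :
    ∃ b, bitWord p q b = d := by
  obtain ⟨t, ht0, ht⟩ := hd
  choose b hb using fun k => exists_bitDigit_eq hq ⟨t (k + 1), (ht k).1.symm⟩ (ht k).2
  have hstate : ∀ k, bitState p q b k = t k := by
    intro k
    induction k with
    | zero => exact ht0.symm
    | succ k ih =>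
      rw [bitState, ih, hb, ← (ht k).1, Int.mul_ediv_cancel_left _ (by exact_mod_cast hq.ne')]
  exact ⟨b, funext fun k => by rw [bitWord, hstate, hb]⟩

theorem IsBranch.mem {E : Set ℤ} {n : ℕ} {w : ℕ → ℤ} (h : IsBranch p q E n w) (i : ℕ) :
    w i ∈ E := by
  obtain ⟨_, _, hs⟩ := h
  exact (hs i).2

theorem isIntBranch_sub {n : ℕ} {x w : ℕ → ℤ} (hx : IsBranch p q (UpAlph p q) n x)
    (hw : IsBranch p q (LowAlph q) n w) : IsIntBranch p q (Dalph p q) (x - w) := by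
  obtain ⟨sx, hsx0, hsx⟩ := hx
  obtain ⟨sw, hsw0, hsw⟩ := hw
  refine ⟨fun k => (sx k : ℤ) - sw k, by simp [hsx0, hsw0], fun k => ?_⟩
  obtain ⟨hxk, hx0, hx1⟩ := hsx k
  obtain ⟨hwk, hw0, hw1⟩ := hsw k
  refine ⟨?_, ?_, ?_⟩ <;> simp only [Pi.sub_apply] <;> linarith

end BitAutomaton

section Cover

variable {p q : ℕ}

noncomputable def prefixValue (p q k : ℕ) (v : Fin k → Bool) : ℝ :=
  ∑ i ∈ Finset.range k,
    ((bitWord p q (fun i => if h : i < k then v ⟨i, h⟩ else false) i : ℝ) / q) *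
      ((q : ℝ) / p) ^ (i + 1)

theorem range_rho_bitWord_subset (hq : 0 < q) (hqp : q < p) (k : ℕ) :
    range (fun b => rho p q (bitWord p q b)) ⊆
      ⋃ v : Fin k → Bool,
        Icc (prefixValue p q k v + ((q : ℝ) / p) ^ k * (((p : ℝ) - 2 * q + 1) / (p - q)))
          (prefixValue p q k v + ((q : ℝ) / p) ^ k * (((p : ℝ) - 2 * q + 1) / (p - q)) +
            ((q : ℝ) / p) ^ k * ((2 * q - 1) / (p - q))) := by
  rintro _ ⟨b, rfl⟩
  refine mem_iUnion.2 ⟨fun i => b i, ?_⟩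
  dsimp only
  have hprefix : ∑ i ∈ Finset.range k, ((bitWord p q b i : ℝ) / q) * ((q : ℝ) / p) ^ (i + 1) =
      prefixValue p q k (fun i => b i) := by
    refine Finset.sum_congr rfl fun i hi => ?_
    rw [bitWord_congr fun j hj => ?_]
    simp [lt_of_le_of_lt hj (Finset.mem_range.1 hi)]
  obtain ⟨htail0, htail1⟩ := rho_mem_Icc hq hqp fun i => bitWord_mem (p := p) hq b (i + k)
  have hr : 0 ≤ ((q : ℝ) / p) ^ k := by positivity
  have hwidth : ((p : ℝ) - 2 * q + 1) / (p - q) + (2 * q - 1) / (p - q) = p / (p - q) := by ring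
  push_cast at htail0 htail1
  rw [rho_eq_sum_add_tail hqp (bitWord_mem hq b) k, hprefix]
  constructor
  · linarith [mul_le_mul_of_nonneg_left htail0 hr]
  · linarith [mul_le_mul_of_nonneg_left htail1 hr, congrArg (((q : ℝ) / p) ^ k * ·) hwidth]

theorem spanSet_subset_range_rho_bitWord (hq : 0 < q) (hqp : q < p) {mw mx : ℕ → ℕ → ℤ}
    (hmw : ∀ n, IsBranch p q (LowAlph q) n (mw n))
    (hmx : ∀ n, IsBranch p q (UpAlph p q) n (mx n)) :
    {x : ℝ | ∃ n : ℕ, x = rho p q (mx n) - rho p q (mw n)} ⊆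
      range (fun b => rho p q (bitWord p q b)) := by
  rintro _ ⟨n, rfl⟩
  obtain ⟨b, hb⟩ := exists_bitWord_eq hq (isIntBranch_sub (hmx n) (hmw n))
  exact ⟨b, by dsimp only; rw [hb, rho_sub hqp (IsBranch.mem (hmx n)) (IsBranch.mem (hmw n))]⟩

end Cover

end SpanSet

open SpanSet

theorem stmt1_general (p q : ℕ) (hco : Nat.Coprime p q) (hq : 1 < q)
    (hbig : 2 * q - 1 < p)
    (mw mx : ℕ → ℕ → ℤ)
    (hmw : ∀ n, IsBranch p q (LowAlph q) n (mw n))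
    (hmx : ∀ n, IsBranch p q (UpAlph p q) n (mx n)) :
    MeasureTheory.volume
      (closure {x : ℝ | ∃ n : ℕ, x = rho p q (mx n) - rho p q (mw n)}) = 0 := by
  have h2q : 2 * q < p := two_mul_lt_of_coprime hco hq hbig
  have hq0 : 0 < q := by omega
  have hqp : q < p := by omega
  refine volume_closure_eq_zero_of_forall_cover (ι := fun k => Fin k → Bool)
    (fun k => ((q : ℝ) / p) ^ k * ((2 * q - 1) / (p - q))) ?_ fun k =>
      ⟨_, (spanSet_subset_range_rho_bitWord hq0 hqp hmw hmx).trans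
        (range_rho_bitWord_subset hq0 hqp k)⟩
  have h2r : 2 * ((q : ℝ) / p) < 1 := by
    rw [mul_div_assoc', div_lt_one (by exact_mod_cast hq0.trans hqp)]
    exact_mod_cast h2q
  simp only [Fintype.card_fun, Fintype.card_bool, Fintype.card_fin, Nat.cast_pow, ← mul_assoc,
    ← mul_pow]
  simpa using (tendsto_pow_atTop_nhds_zero_of_lt_one (by positivity) h2r).mul_const _

theorem stmt1 (p q : ℕ) (hco : Nat.Coprime p q) (hq : 1 < q) (hpq : q < p)
    (hbig : 2 * q - 1 < p)
    (mw mx : ℕ → ℕ → ℤ)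
    (hmw : ∀ n, IsBranch p q (LowAlph q) n (mw n))
    (hmx : ∀ n, IsBranch p q (UpAlph p q) n (mx n)) :
    MeasureTheory.volume
      (closure {x : ℝ | ∃ n : ℕ, x = rho p q (mx n) - rho p q (mw n)}) = 0 :=
  stmt1_general p q hco hq hbig mw mx hmw hmx
end

section
/- Let p and q be coprime integers with p > q > 1. For each n ∈ ℕ let spanword(n) be the ω-word whose k-th digit is maxword(n)_k − minword(n)_k. Then the set of ω-words labelling branches of the automaton S_{p/q} from 0 equals the topological closure of {spanword(n) : n ∈ ℕ} in the space of integer sequences with the product topology (ℤ discrete). -/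
/-- A finite path of length `ℓ` from `n` with digits `u` in `E` (states not recorded). -/
def Chain (p q : ℕ) (E : Set ℤ) (n ℓ : ℕ) (u : ℕ → ℤ) : Prop :=
  ∃ s : ℕ → ℕ, s 0 = n ∧ ∀ k < ℓ, (q : ℤ) * s (k + 1) = p * s k + u k ∧ u k ∈ E

lemma states_eq {p q : ℕ} (hq : 0 < q) (w : ℕ → ℤ) (s s' : ℕ → ℕ) (ℓ : ℕ)
    (h0 : s 0 = s' 0)
    (hs : ∀ k < ℓ, (q : ℤ) * s (k + 1) = (p : ℤ) * s k + w k)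
    (hs' : ∀ k < ℓ, (q : ℤ) * s' (k + 1) = (p : ℤ) * s' k + w k) :
    ∀ k ≤ ℓ, s k = s' k := by
  intro k
  induction k with
  | zero => intro _; exact h0
  | succ k ih =>
    intro hk
    have hk' : k < ℓ := hk
    have h1 := hs k hk'
    have h2 := hs' k hk'
    have he : s k = s' k := ih hk'.le
    have : (q : ℤ) * s (k + 1) = (q : ℤ) * s' (k + 1) := by rw [h1, h2, he]
    have hq' : (q : ℤ) ≠ 0 := by exact_mod_cast hq.ne'
    exact_mod_cast mul_left_cancel₀ hq' this

lemma glue {p q : ℕ} (hq : 0 < q) (E : Set ℤ) (w : ℕ → ℤ)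
    (h : ∀ ℓ : ℕ, Chain p q E 0 ℓ w) : IsBranch p q E 0 w := by
  choose F h0 hrec using h
  refine ⟨fun k => F (k + 1) k, h0 1, fun k => ?_⟩
  have hmem := (hrec (k + 1) k (Nat.lt_succ_self k)).2
  have h1 := (hrec (k + 2) k (by omega)).1
  have heq : F (k + 2) k = F (k + 1) k := by
    refine states_eq (p := p) hq w (F (k + 2)) (F (k + 1)) (k + 1)
      (by rw [h0, h0]) (fun j hj => (hrec (k + 2) j (by omega)).1)
      (fun j hj => (hrec (k + 1) j hj).1) k (by omega)
  exact ⟨by rw [h1, heq], hmem⟩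

/-- digits in an interval of length `q` are determined. -/
lemma digits_eq {p q : ℕ} (hq : 0 < q) (E : Set ℤ)
    (hE : ∀ d ∈ E, ∀ d' ∈ E, (q : ℤ) ∣ d - d' → d = d')
    (n : ℕ) (w u : ℕ → ℤ) (hw : IsBranch p q E n w)
    (ℓ : ℕ) (hu : Chain p q E n ℓ u) :
    ∀ k < ℓ, u k = w k := by
  obtain ⟨s, hs0, hs⟩ := hw
  obtain ⟨s', h0, hs'⟩ := hu
  have step : ∀ k, k < ℓ → s k = s' k → u k = w k ∧ s (k + 1) = s' (k + 1) := by
    intro k hk he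
    have e1 := (hs k).1
    have e2 := (hs' k hk).1
    rw [← he] at e2
    have hd : (q : ℤ) ∣ u k - w k := ⟨(s' (k + 1) : ℤ) - s (k + 1), by rw [mul_sub]; linarith⟩
    have hdig : u k = w k := hE _ (hs' k hk).2 _ (hs k).2 hd
    have : (q : ℤ) * s (k + 1) = (q : ℤ) * s' (k + 1) := by rw [e1, e2, hdig]
    have hq' : (q : ℤ) ≠ 0 := by exact_mod_cast hq.ne'
    exact ⟨hdig, by exact_mod_cast mul_left_cancel₀ hq' this⟩
  have states : ∀ k ≤ ℓ, s k = s' k := by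
    intro k
    induction k with
    | zero => intro _; rw [hs0, h0]
    | succ k ih => intro hk; exact (step k hk (ih (Nat.le_of_succ_le hk))).2
  exact fun k hk => (step k hk (states k hk.le)).1

lemma interval_unique {q : ℕ} (hq : 0 < q) (lo : ℤ) :
    ∀ d ∈ Set.Icc lo (lo + q - 1), ∀ d' ∈ Set.Icc lo (lo + q - 1), (q : ℤ) ∣ d - d' → d = d' := by
  intro d hd d' hd' hdvd
  obtain ⟨c, hc⟩ := hdvd
  obtain ⟨h1, h2⟩ := hd
  obtain ⟨h3, h4⟩ := hd'
  have hq' : (0 : ℤ) < q := by exact_mod_cast hq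
  have hc1 : (q : ℤ) * c < q * 1 := by linarith
  have hc2 : (q : ℤ) * (-1) < q * c := by linarith
  have hx1 := lt_of_mul_lt_mul_left hc1 hq'.le
  have hx2 := lt_of_mul_lt_mul_left hc2 hq'.le
  have hc0 : c = 0 := by omega
  rw [hc0, mul_zero] at hc
  linarith

lemma chain_cons {p q : ℕ} (E : Set ℤ) (n n1 ℓ : ℕ) (u : ℕ → ℤ)
    (hd : (q : ℤ) * n1 = p * n + u 0) (hdE : u 0 ∈ E)
    (hc : Chain p q E n1 ℓ (fun k => u (k + 1))) :
    Chain p q E n (ℓ + 1) u := by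
  obtain ⟨s, h0, hs⟩ := hc
  refine ⟨fun k => Nat.casesOn k n (fun j => s j), rfl, ?_⟩
  intro k hk
  cases k with
  | zero => exact ⟨by simpa [h0] using hd, hdE⟩
  | succ j => exact hs j (by omega)

lemma chain_transfer {p q : ℕ} (hq : 0 < q) :
    ∀ (ℓ : ℕ) (n n' : ℕ) (u : ℕ → ℤ),
      Chain p q (LowAlph q) n ℓ u → ((q : ℤ) ^ ℓ ∣ (n : ℤ) - n') →
      Chain p q (LowAlph q) n' ℓ u := by
  intro ℓ
  induction ℓ with
  | zero => intro n n' u _ _; exact ⟨fun _ => n', rfl, fun k hk => absurd hk (by omega)⟩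
  | succ ℓ ih =>
    intro n n' u hc hdvd
    have hq' : (0 : ℤ) < q := by exact_mod_cast hq
    obtain ⟨s, h0, hs⟩ := hc
    have e0 := (hs 0 (by omega)).1
    have hu0 := (hs 0 (by omega)).2
    have hu0' : (0 : ℤ) ≤ u 0 := hu0.1
    have hqdvd : (q : ℤ) ∣ (n : ℤ) - n' :=
      (dvd_pow_self (q : ℤ) (Nat.succ_ne_zero ℓ)).trans hdvd
    have key : (p : ℤ) * n' + u 0 = q * s 1 - p * ((n : ℤ) - n') := by
      rw [e0, h0]; ring
    have hqd2 : (q : ℤ) ∣ (p : ℤ) * n' + u 0 := by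
      rw [key]; exact dvd_sub (dvd_mul_right _ _) (hqdvd.mul_left p)
    set m1 : ℤ := ((p : ℤ) * n' + u 0) / q with hm1
    have hqm1 : (q : ℤ) * m1 = (p : ℤ) * n' + u 0 := Int.mul_ediv_cancel' hqd2
    have hm1nn : 0 ≤ m1 := Int.ediv_nonneg (by positivity) hq'.le
    set n1 : ℕ := m1.toNat with hn1
    have hn1c : (n1 : ℤ) = m1 := Int.toNat_of_nonneg hm1nn
    have htail : Chain p q (LowAlph q) (s 1) ℓ (fun k => u (k + 1)) :=
      ⟨fun k => s (k + 1), rfl, fun k hk => hs (k + 1) (by omega)⟩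
    have hdvd2 : (q : ℤ) ^ ℓ ∣ (s 1 : ℤ) - n1 := by
      obtain ⟨c, hcc⟩ := hdvd.mul_left (p : ℤ)
      refine ⟨c, ?_⟩
      have hqe : (q : ℤ) * ((s 1 : ℤ) - n1) = (q : ℤ) * ((q : ℤ) ^ ℓ * c) := by
        rw [hn1c, mul_sub, hqm1, e0, h0]
        have : (p : ℤ) * ((n : ℤ) - n') = (q : ℤ) ^ (ℓ + 1) * c := hcc
        rw [pow_succ] at this
        nlinarith [this]
      exact mul_left_cancel₀ hq'.ne' hqe
    have hc2 := ih (s 1) n1 (fun k => u (k + 1)) htail hdvd2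
    exact chain_cons _ _ _ _ _ (by rw [hn1c]; exact hqm1) hu0 hc2

lemma chain_exists {p q : ℕ} (hco : Nat.Coprime p q) (hq : 0 < q) :
    ∀ (ℓ : ℕ) (u : ℕ → ℤ), (∀ k < ℓ, u k ∈ LowAlph q) →
      ∃ n : ℕ, Chain p q (LowAlph q) n ℓ u := by
  intro ℓ
  induction ℓ with
  | zero => intro u _; exact ⟨0, fun _ => 0, rfl, fun k hk => absurd hk (by omega)⟩
  | succ ℓ ih =>
    intro u hu
    have hq' : (0 : ℤ) < q := by exact_mod_cast hq
    obtain ⟨n', hc'⟩ := ih (fun k => u (k + 1)) (fun k hk => hu (k + 1) (by omega))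
    have hu0 := hu 0 (by omega)
    have hu0' : (0 : ℤ) ≤ u 0 := hu0.1
    have hcop : IsCoprime (p : ℤ) ((q : ℤ) ^ (ℓ + 1)) := by
      have h1 : Nat.Coprime p (q ^ (ℓ + 1)) := hco.pow_right _
      have := (Nat.isCoprime_iff_coprime).mpr h1
      simpa using this
    obtain ⟨a, b, hab⟩ := hcop
    set M : ℤ := (q : ℤ) ^ (ℓ + 1) with hM
    have hMpos : 0 < M := by positivity
    set z : ℤ := a * ((q : ℤ) * n' - u 0) with hz
    set n : ℕ := (z % M).toNat with hn
    have hnn : 0 ≤ z % M := Int.emod_nonneg z hMpos.ne'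
    have hnc : (n : ℤ) = z % M := Int.toNat_of_nonneg hnn
    have h1 : M ∣ (p : ℤ) * z + u 0 - (q : ℤ) * n' :=
      ⟨-b * ((q : ℤ) * n' - u 0), by rw [hz]; linear_combination ((q : ℤ) * n' - u 0) * hab⟩
    have h2 : M ∣ (p : ℤ) * (z % M - z) :=
      Dvd.dvd.mul_left ⟨-(z / M), by rw [Int.emod_def]; ring⟩ p
    have hdM : M ∣ (p : ℤ) * n + u 0 - (q : ℤ) * n' := by
      have h3 := dvd_add h1 h2
      have e : (p : ℤ) * (z % M) + u 0 - (q : ℤ) * n'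
          = ((p : ℤ) * z + u 0 - (q : ℤ) * n') + (p : ℤ) * (z % M - z) := by ring
      rw [hnc, e]; exact h3
    have hqd : (q : ℤ) ∣ (p : ℤ) * n + u 0 := by
      have h4 := ((dvd_pow_self (q : ℤ) (Nat.succ_ne_zero ℓ)).trans hdM).add
        (dvd_mul_right (q : ℤ) (n' : ℤ))
      have e : (p : ℤ) * n + u 0 = ((p : ℤ) * n + u 0 - (q : ℤ) * n') + (q : ℤ) * n' := by ring
      rw [e]; exact h4
    set m1 : ℤ := ((p : ℤ) * n + u 0) / q with hm1
    have hqm1 : (q : ℤ) * m1 = (p : ℤ) * n + u 0 := Int.mul_ediv_cancel' hqd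
    have hm1nn : 0 ≤ m1 := Int.ediv_nonneg (by positivity) hq'.le
    set n1 : ℕ := m1.toNat with hn1
    have hn1c : (n1 : ℤ) = m1 := Int.toNat_of_nonneg hm1nn
    have hdvd2 : (q : ℤ) ^ ℓ ∣ (n' : ℤ) - n1 := by
      obtain ⟨c, hcc⟩ := hdM
      refine ⟨-c, ?_⟩
      have hqe : (q : ℤ) * ((n' : ℤ) - n1) = (q : ℤ) * ((q : ℤ) ^ ℓ * (-c)) := by
        rw [hn1c]
        have : (q : ℤ) * m1 - (q : ℤ) * n' = M * c := by rw [hqm1]; linarith [hcc]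
        rw [hM, pow_succ] at this
        nlinarith [this]
      exact mul_left_cancel₀ hq'.ne' hqe
    have hc2 := chain_transfer hq ℓ n' n1 (fun k => u (k + 1)) hc' hdvd2
    exact ⟨n, chain_cons _ _ _ _ _ (by rw [hn1c]; exact hqm1) hu0 hc2⟩

lemma span_branch {p q : ℕ} (hq : 1 < q) (hpq : q < p) (n : ℕ) (wa wb : ℕ → ℤ)
    (ha : IsBranch p q (LowAlph q) n wa) (hb : IsBranch p q (UpAlph p q) n wb) :
    IsBranch p q (Dalph p q) 0 (fun k => wb k - wa k) := by
  have hp' : (0 : ℤ) < p := by exact_mod_cast (by omega : 0 < p)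
  have hq' : (0 : ℤ) < q := by exact_mod_cast (by omega : 0 < q)
  have hpq' : (q : ℤ) < p := by exact_mod_cast hpq
  obtain ⟨y, hy0, hy⟩ := ha
  obtain ⟨x, hx0, hx⟩ := hb
  have hle : ∀ k, y k ≤ x k := by
    intro k
    induction k with
    | zero => rw [hy0, hx0]
    | succ k ih =>
      by_contra hlt
      push_neg at hlt
      have h1 : (x (k + 1) : ℤ) + 1 ≤ y (k + 1) := by exact_mod_cast hlt
      have h2 := (hy k).1
      have h3 := (hx k).1
      have h4 : (y k : ℤ) ≤ x k := by exact_mod_cast ih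
      have h5 : (p : ℤ) * y k ≤ p * x k := by
        exact mul_le_mul_of_nonneg_left h4 hp'.le
      have h6 := (hy k).2.2
      have h7 := (hx k).2.1
      unfold LowAlph at h6
      unfold UpAlph at h7
      have h6' : wa k ≤ (q : ℤ) - 1 := h6
      have h7' : (p : ℤ) - q ≤ wb k := h7
      nlinarith [h1, h2, h3, h5, h6', h7']
  refine ⟨fun k => x k - y k, by show x 0 - y 0 = 0; rw [hx0, hy0, Nat.sub_self], fun k => ?_⟩
  have hc : ∀ j, ((x j - y j : ℕ) : ℤ) = (x j : ℤ) - y j := fun j => by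
    push_cast [Nat.cast_sub (hle j)]; ring
  constructor
  · dsimp only
    rw [hc, hc]
    have h2 := (hy k).1
    have h3 := (hx k).1
    linarith
  · have h6 := (hy k).2
    have h7 := (hx k).2
    obtain ⟨h6a, h6b⟩ := h6
    obtain ⟨h7a, h7b⟩ := h7
    exact ⟨by dsimp only; linarith, by dsimp only; linarith⟩

lemma prefix_realized {p q : ℕ} (hco : Nat.Coprime p q) (hq : 1 < q) (hpq : q < p)
    (mw mx : ℕ → ℕ → ℤ)
    (hmw : ∀ n, IsBranch p q (LowAlph q) n (mw n))
    (hmx : ∀ n, IsBranch p q (UpAlph p q) n (mx n))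
    (w : ℕ → ℤ) (hw : IsBranch p q (Dalph p q) 0 w) (ℓ : ℕ) :
    ∃ n, ∀ k < ℓ, mx n k - mw n k = w k := by
  have hq0 : 0 < q := by omega
  have hq' : (0 : ℤ) < q := by exact_mod_cast hq0
  have hpq' : (q : ℤ) < p := by exact_mod_cast hpq
  obtain ⟨t, ht0, ht⟩ := hw
  set a : ℕ → ℤ := fun k => max 0 ((p : ℤ) - q - w k) with hadef
  set b : ℕ → ℤ := fun k => w k + a k with hbdef
  have hwD : ∀ k, ((p : ℤ) - 2 * q + 1 ≤ w k ∧ w k ≤ (p : ℤ) - 1) := fun k => (ht k).2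
  have haL : ∀ k < ℓ, a k ∈ LowAlph q := by
    intro k _
    refine ⟨le_max_left _ _, max_le (by linarith) (by linarith [(hwD k).1])⟩
  have hbU : ∀ k < ℓ, b k ∈ UpAlph p q := by
    intro k _
    constructor
    · have := le_max_right 0 ((p : ℤ) - q - w k)
      simp only [hbdef, hadef]; linarith
    · rcases max_choice 0 ((p : ℤ) - q - w k) with h | h <;>
        simp only [hbdef, hadef, h] <;> linarith [(hwD k).2]
  obtain ⟨n, y, hy0, hy⟩ := chain_exists hco hq0 ℓ a haL
  have hxchain : Chain p q (UpAlph p q) n ℓ b := by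
    refine ⟨fun k => y k + t k, by show y 0 + t 0 = n; rw [hy0, ht0]; ring, fun k hk => ?_⟩
    have h1 := (hy k hk).1
    have h2 := (ht k).1
    refine ⟨by show (q:ℤ) * ((y (k+1) + t (k+1) : ℕ) : ℤ) = _; simp only [hbdef]; push_cast; linarith, hbU k hk⟩
  have hEu : ∀ d ∈ UpAlph p q, ∀ d' ∈ UpAlph p q, (q : ℤ) ∣ d - d' → d = d' := by
    intro d hd d' hd' h
    exact interval_unique hq0 ((p : ℤ) - q) d ⟨hd.1, by linarith [hd.2]⟩
      d' ⟨hd'.1, by linarith [hd'.2]⟩ h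
  have hEl : ∀ d ∈ LowAlph q, ∀ d' ∈ LowAlph q, (q : ℤ) ∣ d - d' → d = d' := by
    intro d hd d' hd' h
    exact interval_unique hq0 0 d ⟨hd.1, by linarith [hd.2]⟩
      d' ⟨hd'.1, by linarith [hd'.2]⟩ h
  have hbx : ∀ k < ℓ, b k = mx n k := digits_eq hq0 _ hEu n (mx n) b (hmx n) ℓ hxchain
  have hay : ∀ k < ℓ, a k = mw n k :=
    digits_eq hq0 _ hEl n (mw n) a (hmw n) ℓ ⟨y, hy0, hy⟩
  refine ⟨n, fun k hk => ?_⟩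
  rw [← hbx k hk, ← hay k hk]
  simp only [hbdef]; ring

theorem stmt5 (p q : ℕ) (hco : Nat.Coprime p q) (hq : 1 < q) (hpq : q < p)
    (mw mx : ℕ → ℕ → ℤ)
    (hmw : ∀ n, IsBranch p q (LowAlph q) n (mw n))
    (hmx : ∀ n, IsBranch p q (UpAlph p q) n (mx n)) :
    {w : ℕ → ℤ | IsBranch p q (Dalph p q) 0 w}
      = closure {w : ℕ → ℤ | ∃ n : ℕ, w = fun k => mx n k - mw n k} := by
  have hq0 : 0 < q := by omega
  ext w
  simp only [Set.mem_setOf_eq]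
  constructor
  · intro hw
    rw [mem_closure_iff]
    intro o ho hwo
    obtain ⟨I, uo, huo, hsub⟩ := isOpen_pi_iff.mp ho w hwo
    obtain ⟨n, hn⟩ := prefix_realized hco hq hpq mw mx hmw hmx w hw (I.sup id + 1)
    refine ⟨fun k => mx n k - mw n k, hsub ?_, ⟨n, rfl⟩⟩
    intro i hi
    have hiℓ : i < I.sup id + 1 := Nat.lt_succ_of_le (Finset.le_sup (f := id) hi)
    have := hn i hiℓ
    simpa [this] using (huo i hi).2
  · intro hw
    apply glue hq0
    intro ℓ
    have hcyl : IsOpen (Set.pi (↑(Finset.range ℓ)) (fun i => ({w i} : Set ℤ))) :=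
      isOpen_set_pi (Finset.finite_toSet _) (fun i _ => isOpen_discrete _)
    have hwin : w ∈ Set.pi (↑(Finset.range ℓ)) (fun i => ({w i} : Set ℤ)) :=
      Set.mem_pi.mpr (fun i _ => rfl)
    obtain ⟨v, hv1, hv2⟩ := mem_closure_iff.mp hw _ hcyl hwin
    obtain ⟨n, rfl⟩ := hv2
    obtain ⟨t, ht0, ht⟩ := span_branch hq hpq n (mw n) (mx n) (hmw n) (hmx n)
    refine ⟨t, ht0, fun k hk => ?_⟩
    have hvk : mx n k - mw n k = w k := by
      have := Set.mem_pi.mp hv1 k (by simp [hk])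
      simpa using this
    refine ⟨?_, ?_⟩
    · have := (ht k).1
      dsimp only at this
      rw [← hvk]
      exact this
    · have := (ht k).2
      dsimp only at this
      rw [← hvk]
      exact this
end

section
/- Let p and q be coprime integers with p > q > 1. Let i ∈ ℕ and let w = w_1⋯w_ℓ be a finite word over D = {p−2q+1, …, p−1}. The following are equivalent: (a) there exists j ∈ ℕ such that w labels a path from i to j in the automaton S_{p/q}; (b) there exists n ∈ ℕ such that w_k = maxword(n+i)_k − minword(n)_k for all 1 ≤ k ≤ ℓ, i.e. w is a prefix of the digitwise difference maxword(n+i) ⊖ minword(n). -/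
lemma step_unique (q : ℕ) (hq : 0 < q) {a lo : ℤ} {s t : ℕ} {d e : ℤ}
    (h1 : (q:ℤ) * s = a + d) (h2 : (q:ℤ) * t = a + e)
    (hd1 : lo ≤ d) (hd2 : d ≤ lo + q - 1)
    (he1 : lo ≤ e) (he2 : e ≤ lo + q - 1) :
    s = t ∧ d = e := by
  have hq' : (0:ℤ) < q := by exact_mod_cast hq
  have hst : (s:ℤ) = t := by
    rcases lt_trichotomy (s:ℤ) (t:ℤ) with h | h | h
    · exfalso
      have h' : (s:ℤ) + 1 ≤ t := h
      have := mul_le_mul_of_nonneg_left h' hq'.le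
      rw [mul_add, mul_one] at this
      linarith
    · exact h
    · exfalso
      have h' : (t:ℤ) + 1 ≤ s := h
      have := mul_le_mul_of_nonneg_left h' hq'.le
      rw [mul_add, mul_one] at this
      linarith
  refine ⟨by exact_mod_cast hst, by rw [hst] at h1; linarith⟩

lemma exists_mul_add_dvd (P q : ℕ) (hco : Nat.Coprime P q) (hq : 0 < q) (c : ℤ) :
    ∃ m : ℕ, (q:ℤ) ∣ (P:ℤ) * m + c := by
  haveI : NeZero q := ⟨hq.ne'⟩
  have hu : IsUnit (P : ZMod q) := by
    refine ⟨ZMod.unitOfCoprime P hco, ?_⟩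
    simp [ZMod.unitOfCoprime]
  refine ⟨(((-c : ℤ) : ZMod q) * (P : ZMod q)⁻¹).val, ?_⟩
  rw [← ZMod.intCast_zmod_eq_zero_iff_dvd]
  push_cast
  rw [ZMod.natCast_val, ZMod.cast_id]
  rw [mul_left_comm, ZMod.mul_inv_of_unit _ hu, mul_one]
  ring

lemma exists_states (p q : ℕ) (hco : Nat.Coprime p q) (hq : 0 < q) :
    ∀ (ℓ : ℕ) (y : ℕ → ℤ), (∀ k < ℓ, 0 ≤ y k) →
    ∃ A : ℕ → ℕ, ∀ k < ℓ, (q:ℤ) * A (k+1) = p * A k + y k := by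
  intro ℓ
  induction ℓ with
  | zero => exact fun y _ => ⟨fun _ => 0, fun k hk => absurd hk (Nat.not_lt_zero k)⟩
  | succ ℓ ih =>
    intro y hy
    obtain ⟨A, hA⟩ := ih y (fun k hk => hy k (hk.trans (Nat.lt_succ_self ℓ)))
    obtain ⟨m, hm⟩ := exists_mul_add_dvd (p^(ℓ+1)) q (hco.pow_left _) hq
      ((p:ℤ) * A ℓ + y ℓ)
    obtain ⟨z, hz⟩ := hm
    have hyl : 0 ≤ y ℓ := hy ℓ (Nat.lt_succ_self ℓ)
    have hz0 : 0 ≤ z := by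
      have h1 : (0:ℤ) ≤ (q:ℤ) * z := by
        rw [← hz]; positivity
      nlinarith [h1, (by exact_mod_cast hq : (0:ℤ) < (q:ℤ))]
    refine ⟨fun k => if k ≤ ℓ then A k + m * p^k * q^(ℓ - k) else z.toNat, ?_⟩
    intro k hk
    rcases Nat.lt_or_ge k ℓ with hkl | hkl
    · have h1 : k + 1 ≤ ℓ := hkl
      have h2 : k ≤ ℓ := hkl.le
      simp only [h1, h2, if_pos]
      obtain ⟨d, hd⟩ : ∃ d, ℓ - k = d + 1 := ⟨ℓ - k - 1, by omega⟩
      have hd2 : ℓ - (k+1) = d := by omega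
      rw [hd, hd2]
      have := hA k hkl
      push_cast
      push_cast at this
      ring_nf
      ring_nf at this
      nlinarith [this]
    · have hkeq : k = ℓ := by omega
      subst hkeq
      have h1 : ¬ (k + 1 ≤ k) := by omega
      simp only [if_neg h1, if_pos (le_refl k), Nat.sub_self, pow_zero, mul_one]
      rw [Int.toNat_of_nonneg hz0]
      push_cast
      push_cast at hz
      ring_nf
      ring_nf at hz
      linarith [hz]

lemma branch_eq (p q : ℕ) (hq : 0 < q) (lo : ℤ) (ℓ : ℕ) (s A : ℕ → ℕ) (d e : ℕ → ℤ)
    (h0 : s 0 = A 0)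
    (hs : ∀ k < ℓ, (q:ℤ) * s (k+1) = p * s k + d k ∧ lo ≤ d k ∧ d k ≤ lo + q - 1)
    (hA : ∀ k < ℓ, (q:ℤ) * A (k+1) = p * A k + e k ∧ lo ≤ e k ∧ e k ≤ lo + q - 1) :
    ∀ k < ℓ, d k = e k := by
  have key : ∀ k, k ≤ ℓ → s k = A k := by
    intro k
    induction k with
    | zero => exact fun _ => h0
    | succ k ihk =>
      intro hk
      have hk' : k < ℓ := hk
      obtain ⟨hs1, hs2, hs3⟩ := hs k hk'
      obtain ⟨hA1, hA2, hA3⟩ := hA k hk'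
      rw [ihk hk'.le] at hs1
      exact (step_unique q hq hs1 hA1 hs2 hs3 hA2 hA3).1
  intro k hk
  obtain ⟨hs1, hs2, hs3⟩ := hs k hk
  obtain ⟨hA1, hA2, hA3⟩ := hA k hk
  rw [key k hk.le] at hs1
  exact (step_unique q hq hs1 hA1 hs2 hs3 hA2 hA3).2

theorem stmt6 (p q : ℕ) (hco : Nat.Coprime p q) (hq : 1 < q) (hpq : q < p)
    (mw mx : ℕ → ℕ → ℤ)
    (hmw : ∀ n, IsBranch p q (LowAlph q) n (mw n))
    (hmx : ∀ n, IsBranch p q (UpAlph p q) n (mx n))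
    (i ℓ : ℕ) (w : ℕ → ℤ) (hw : ∀ k < ℓ, w k ∈ Dalph p q) :
    (∃ j : ℕ, IsPath p q (Dalph p q) i j ℓ w)
      ↔ (∃ n : ℕ, ∀ k < ℓ, w k = mx (n + i) k - mw n k) := by
  have hq0 : 0 < q := by omega
  have hq2 : (2:ℤ) ≤ q := by exact_mod_cast hq
  have hpq' : (q:ℤ) < p := by exact_mod_cast hpq
  have hwb : ∀ k < ℓ, (p:ℤ) - 2*q + 1 ≤ w k ∧ w k ≤ (p:ℤ) - 1 := by
    intro k hk
    have := hw k hk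
    rw [Dalph, Set.mem_Icc] at this
    exact this
  constructor
  · rintro ⟨j, t, ht0, htl, htstep⟩
    -- decompose w k = x k - y k
    set y : ℕ → ℤ := fun k => max 0 ((p:ℤ) - q - w k) with hy_def
    have hy : ∀ k < ℓ, 0 ≤ y k ∧ y k ≤ (q:ℤ) - 1 ∧
        (p:ℤ) - q ≤ w k + y k ∧ w k + y k ≤ (p:ℤ) - 1 := by
      intro k hk
      obtain ⟨h1, h2⟩ := hwb k hk
      rcases le_total ((p:ℤ) - q - w k) 0 with h | h
      · have : y k = 0 := max_eq_left h
        rw [this]; constructor; · linarith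
        constructor; · linarith
        constructor <;> linarith
      · have : y k = (p:ℤ) - q - w k := max_eq_right h
        rw [this]; constructor; · linarith
        constructor; · linarith
        constructor <;> linarith
    obtain ⟨A, hA⟩ := exists_states p q hco hq0 ℓ y (fun k hk => (hy k hk).1)
    set n := A 0 with hn_def
    obtain ⟨a, ha0, ha⟩ := hmw n
    obtain ⟨b, hb0, hb⟩ := hmx (n + i)
    -- mw n matches y
    have hmwy : ∀ k < ℓ, mw n k = y k := by
      apply branch_eq p q hq0 0 ℓ a A (mw n) y ha0
      · intro k hk
        refine ⟨(ha k).1, ?_, ?_⟩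
        · have := (ha k).2; rw [LowAlph, Set.mem_Icc] at this; linarith [this.1]
        · have := (ha k).2; rw [LowAlph, Set.mem_Icc] at this; linarith [this.2]
      · intro k hk
        obtain ⟨h1, h2, _, _⟩ := hy k hk
        exact ⟨hA k hk, h1, by linarith⟩
    -- mx (n+i) matches x = w + y
    have hmxx : ∀ k < ℓ, mx (n + i) k = w k + y k := by
      apply branch_eq p q hq0 ((p:ℤ) - q) ℓ b (fun k => A k + t k) (mx (n+i))
        (fun k => w k + y k)
      · rw [hb0, ht0]
      · intro k hk
        refine ⟨(hb k).1, ?_, ?_⟩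
        · have := (hb k).2; rw [UpAlph, Set.mem_Icc] at this; linarith [this.1]
        · have := (hb k).2; rw [UpAlph, Set.mem_Icc] at this; linarith [this.2]
      · intro k hk
        obtain ⟨_, _, h3, h4⟩ := hy k hk
        refine ⟨?_, h3, by linarith⟩
        have e1 := hA k hk
        have e2 := (htstep k hk).1
        push_cast
        linarith
    refine ⟨n, fun k hk => ?_⟩
    rw [hmwy k hk, hmxx k hk]
    ring
  · rintro ⟨n, hn⟩
    obtain ⟨a, ha0, ha⟩ := hmw n
    obtain ⟨b, hb0, hb⟩ := hmx (n + i)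
    have hab : ∀ k, a k ≤ b k := by
      intro k
      induction k with
      | zero => rw [ha0, hb0]; omega
      | succ k ih =>
        by_contra h
        push_neg at h
        have h' : (b (k+1) : ℤ) + 1 ≤ a (k+1) := by exact_mod_cast h
        have hmul : (q:ℤ) * ((b (k+1) : ℤ) + 1) ≤ q * a (k+1) :=
          mul_le_mul_of_nonneg_left h' (by positivity)
        rw [mul_add, mul_one] at hmul
        have hpab : (p:ℤ) * a k ≤ p * b k := by
          have := Nat.mul_le_mul_left p ih
          exact_mod_cast this
        have e1 := (ha k).1
        have e2 := (hb k).1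
        have b1 := (ha k).2; rw [LowAlph, Set.mem_Icc] at b1
        have b2 := (hb k).2; rw [UpAlph, Set.mem_Icc] at b2
        linarith [b1.2, b2.1]
    refine ⟨b ℓ - a ℓ, fun k => b k - a k, ?_, rfl, ?_⟩
    · show b 0 - a 0 = i
      rw [ha0, hb0]; omega
    · intro k hk
      refine ⟨?_, hw k hk⟩
      show (q:ℤ) * ((b (k+1) - a (k+1) : ℕ) : ℤ) = p * ((b k - a k : ℕ) : ℤ) + w k
      have e0 : ((b k - a k : ℕ) : ℤ) = (b k : ℤ) - a k := by
        have := hab k; push_cast [Nat.cast_sub this]; ring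
      have e1 : ((b (k+1) - a (k+1) : ℕ) : ℤ) = (b (k+1) : ℤ) - a (k+1) := by
        have := hab (k+1); push_cast [Nat.cast_sub this]; ring
      rw [e0, e1]
      have f1 := (ha k).1
      have f2 := (hb k).1
      have f3 := hn k hk
      linarith
end

section
/- Let p and q be coprime integers with p > q > 1. For all n, i ∈ ℕ, the ω-word whose k-th digit is maxword(n+i)_k − minword(n)_k labels a branch of the automaton S_{p/q} from the state i. -/
theorem stmt7 (p q : ℕ) (hco : Nat.Coprime p q) (hq : 1 < q) (hpq : q < p)
    (mw mx : ℕ → ℕ → ℤ)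
    (hmw : ∀ n, IsBranch p q (LowAlph q) n (mw n))
    (hmx : ∀ n, IsBranch p q (UpAlph p q) n (mx n)) :
    ∀ n i : ℕ, IsBranch p q (Dalph p q) i (fun k => mx (n + i) k - mw n k) := by
  intro n i
  obtain ⟨s, hs0, hs⟩ := hmw n
  obtain ⟨t, ht0, ht⟩ := hmx (n + i)
  -- s k ≤ t k for all k
  have hle : ∀ k, s k ≤ t k := by
    intro k
    induction k with
    | zero => simp [hs0, ht0]
    | succ k ih =>
      have h1 := (hs k).1
      have h2 := (ht k).1
      have hw := (hs k).2
      have hx := (ht k).2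
      simp only [LowAlph, UpAlph, Set.mem_Icc] at hw hx
      have key : (q : ℤ) * t (k + 1) ≥ (q : ℤ) * s (k + 1) - q + 1 := by
        have : (p : ℤ) * s k ≤ (p : ℤ) * t k := by
          have : (0:ℤ) ≤ p := by positivity
          exact mul_le_mul_of_nonneg_left (by exact_mod_cast ih) this
        have hpq' : (q : ℤ) < p := by exact_mod_cast hpq
        omega
      have hq' : (0:ℤ) < q := by exact_mod_cast Nat.lt_of_lt_of_le Nat.zero_lt_one hq.le
      have : (s (k+1) : ℤ) ≤ t (k+1) := by nlinarith
      exact_mod_cast this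
  refine ⟨fun k => t k - s k, by simp [hs0, ht0], fun k => ?_⟩
  have h1 := (hs k).1
  have h2 := (ht k).1
  have hw := (hs k).2
  have hx := (ht k).2
  simp only [LowAlph, UpAlph, Set.mem_Icc] at hw hx
  have hk := hle k
  have hk1 := hle (k + 1)
  constructor
  · push_cast [Nat.cast_sub hk, Nat.cast_sub hk1]
    ring_nf
    ring_nf at h1 h2
    linarith
  · simp only [Dalph, Set.mem_Icc]
    have hpq' : (q : ℤ) < p := by exact_mod_cast hpq
    constructor <;> linarith
end

section
/- Let p and q be coprime integers with p > q > 1. Let u = u_1⋯u_ℓ be a finite word with all letters in {0,…,q−1}, let v = v_1⋯v_ℓ be a finite word of the same length with all letters in {p−q,…,p−1}, and let n, m ∈ ℕ be such that u labels a path from n to m in T_{p/q}. Then for all i, j ∈ ℕ: v labels a path from n+i to m+j in T_{p/q} if and only if the digitwise difference v ⊖ u (the word whose k-th letter is v_k − u_k) labels a path from i to j in the automaton S_{p/q}. -/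
theorem stmt8 (p q : ℕ) (hco : Nat.Coprime p q) (hq : 1 < q) (hpq : q < p)
    (ℓ : ℕ) (u v : ℕ → ℤ)
    (hu : ∀ k < ℓ, u k ∈ LowAlph q) (hv : ∀ k < ℓ, v k ∈ UpAlph p q)
    (n m : ℕ) (hpath : IsPath p q (Ap p) n m ℓ u) :
    ∀ i j : ℕ,
      IsPath p q (Ap p) (n + i) (m + j) ℓ v
        ↔ IsPath p q (Dalph p q) i j ℓ (fun k => v k - u k) := by
  obtain ⟨s, hs0, hsl, hstep⟩ := hpath
  intro i j
  constructor
  · rintro ⟨t, ht0, htl, htstep⟩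
    have key : ∀ k, k ≤ ℓ → s k ≤ t k := by
      intro k
      induction k with
      | zero => intro _; omega
      | succ k ih =>
        intro hk
        have hk' : k < ℓ := by omega
        have h1 := (hstep k hk').1
        have h2 := (htstep k hk').1
        have hu' := hu k hk'
        have hv' := hv k hk'
        simp only [LowAlph, Set.mem_Icc] at hu'
        simp only [UpAlph, Set.mem_Icc] at hv'
        have ihk : (s k : ℤ) ≤ t k := by exact_mod_cast ih (le_of_lt hk')
        have : (s (k+1) : ℤ) ≤ t (k+1) := by
          by_contra hcon
          push_neg at hcon
          have hcon' : (t (k+1) : ℤ) + 1 ≤ s (k+1) := by omega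
          have hq0 : (0:ℤ) ≤ q := by positivity
          have hp0 : (0:ℤ) ≤ p := by positivity
          have h3 := mul_le_mul_of_nonneg_left hcon' hq0
          have h4 := mul_le_mul_of_nonneg_left ihk hp0
          have hpq' : (q:ℤ) < p := by exact_mod_cast hpq
          nlinarith [h1, h2, h3, h4, hu'.1, hu'.2, hv'.1, hv'.2]
        exact_mod_cast this
    refine ⟨fun k => t k - s k, by show t 0 - s 0 = i; omega, by show t ℓ - s ℓ = j; have := key ℓ le_rfl; omega, ?_⟩
    intro k hk
    have h1 := (hstep k hk).1
    have h2 := (htstep k hk).1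
    have hu' := hu k hk
    have hv' := hv k hk
    simp only [LowAlph, Set.mem_Icc] at hu'
    simp only [UpAlph, Set.mem_Icc] at hv'
    have k1 := key k (le_of_lt hk)
    have k2 := key (k+1) hk
    constructor
    · push_cast [Nat.cast_sub k1, Nat.cast_sub k2]
      linarith
    · simp only [Dalph, Set.mem_Icc]
      have hq' : (1:ℤ) < q := by exact_mod_cast hq
      constructor <;> linarith
  · rintro ⟨r, hr0, hrl, hrstep⟩
    refine ⟨fun k => s k + r k, by show s 0 + r 0 = n + i; omega, by show s ℓ + r ℓ = m + j; omega, ?_⟩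
    intro k hk
    have h1 := (hstep k hk).1
    have h2 := (hrstep k hk).1
    have hv' := hv k hk
    simp only [UpAlph, Set.mem_Icc] at hv'
    have hpq' : (q:ℤ) < p := by exact_mod_cast hpq
    constructor
    · push_cast
      simp only at h2
      linarith
    · simp only [Ap, Set.mem_Icc]
      constructor <;> linarith
end

section
/- Let p and q be coprime integers with p > q > 1. For all n, i ∈ ℕ there exists a sequence of states m_0, m_1, m_2, ⋯ in ℕ with m_0 = i such that for every k ≥ 0, q·m_{k+1} = p·m_k + (minword(n+i+1)_{k+1} − minword(n)_{k+1}) + (p − q). (That is, the transducer D_{p/q} started in state i accepts the pair (minword(n), minword(n+i+1)).) -/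
theorem stmt9 (p q : ℕ) (hco : Nat.Coprime p q) (hq : 1 < q) (hpq : q < p)
    (mw : ℕ → ℕ → ℤ)
    (hmw : ∀ n, IsBranch p q (LowAlph q) n (mw n)) :
    ∀ n i : ℕ, ∃ s : ℕ → ℕ, s 0 = i ∧
      ∀ k : ℕ, (q : ℤ) * s (k + 1)
        = p * s k + (mw (n + i + 1) k - mw n k) + ((p : ℤ) - q) := by
  intro n i
  obtain ⟨s, hs0, hs⟩ := hmw n
  obtain ⟨t, ht0, ht⟩ := hmw (n + i + 1)
  have hlt : ∀ k, s k < t k := by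
    intro k
    induction k with
    | zero => omega
    | succ k ih =>
      have h1 := (hs k).1
      have h2 := (ht k).1
      have hw1 := (hs k).2
      have hw2 := (ht k).2
      simp only [LowAlph, Set.mem_Icc] at hw1 hw2
      have hq' : (0:ℤ) < q := by exact_mod_cast Nat.lt_of_lt_of_le Nat.zero_lt_one hq.le
      have : (q:ℤ) * s (k+1) < (q:ℤ) * t (k+1) := by
        have hsk : (s k : ℤ) + 1 ≤ t k := by exact_mod_cast ih
        have hp' : (q:ℤ) < p := by exact_mod_cast hpq
        nlinarith [hw1.1, hw1.2, hw2.1, hw2.2]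
      have := lt_of_mul_lt_mul_left this hq'.le
      exact_mod_cast this
  refine ⟨fun k => t k - s k - 1, by show t 0 - s 0 - 1 = i; omega, fun k => ?_⟩
  have h1 := (hs k).1
  have h2 := (ht k).1
  have hk := hlt k
  have hk1 := hlt (k+1)
  have c1 : ((t (k+1) - s (k+1) - 1 : ℕ) : ℤ) = (t (k+1) : ℤ) - s (k+1) - 1 := by
    have : s (k+1) + 1 ≤ t (k+1) := hk1
    push_cast [Nat.cast_sub (by omega : s (k+1) + 1 ≤ t (k+1))]
    omega
  have c2 : ((t k - s k - 1 : ℕ) : ℤ) = (t k : ℤ) - s k - 1 := by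
    push_cast [Nat.cast_sub (by omega : s k + 1 ≤ t k)]
    omega
  rw [c1, c2]
  linarith
end

section
/- Let p and q be coprime integers with p > q > 1. For every n ∈ ℕ and every ω-word w with all digits in {0,…,q−1}: (a) there exists a unique ω-word v with all digits in {0,…,q−1} for which there is a sequence of states m_0 = n, m_1, m_2, ⋯ in ℕ with q·m_{k+1} = p·m_k + (v_{k+1} − w_{k+1}) + (p − q) for all k ≥ 0; and (b) there exists a unique ω-word u with all digits in {0,…,q−1} for which there is a sequence of states m_0 = n, m_1, m_2, ⋯ in ℕ with q·m_{k+1} = p·m_k + (w_{k+1} − u_{k+1}) + (p − q) for all k ≥ 0. (Consequently the transducer D_{p/q} realises a bijection of {0,…,q−1}^ω onto itself.) -/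
/-!
Both parts are instances of one fact: if `d k ≥ 1 - q` for all `k`, then from any state there is
exactly one word `x` over `{0,…,q-1}` admitting states with `q·s(k+1) = p·s k + x k + d k`.
At each step `x k` is forced to be the residue of `-(p·s k + d k)` modulo `q`, which forces
`s (k+1)` in turn, and the bound on `d k` keeps `s (k+1)` nonnegative. Part (a) takes
`d k = p - q - w k`; part (b) takes `d k = w k + p - 2q + 1` after reflecting the digits,
`u k ↦ q - 1 - u k`.
-/

section Carry

variable {q : ℕ}

def lowDigit (q : ℕ) (t : ℤ) : ℤ := -t % q

def carry (q : ℕ) (t : ℤ) : ℕ := ((t + lowDigit q t) / q).toNat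

lemma lowDigit_mem_lowAlph (hq : 0 < q) (t : ℤ) : lowDigit q t ∈ LowAlph q := by
  have := Int.emod_lt_of_pos (-t) (Int.natCast_pos.2 hq)
  exact ⟨Int.emod_nonneg _ (by omega), by unfold lowDigit; omega⟩

lemma dvd_add_lowDigit (q : ℕ) (t : ℤ) : (q : ℤ) ∣ t + lowDigit q t :=
  ⟨-(-t / q), by rw [lowDigit, Int.emod_def]; ring⟩

lemma eq_lowDigit_of_dvd {t x : ℤ} (hx : x ∈ LowAlph q) (hdvd : (q : ℤ) ∣ t + x) :
    x = lowDigit q t := by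
  have hx' : x ≡ -t [ZMOD q] := Int.modEq_iff_dvd.2 (by rw [← neg_add']; exact hdvd.neg_right)
  rw [lowDigit, ← hx', Int.emod_eq_of_lt hx.1 (by linarith [hx.2])]

lemma lowAlph_step_iff (hq : 0 < q) {t : ℤ} (ht : 1 - q ≤ t) (x : ℤ) (m : ℕ) :
    x ∈ LowAlph q ∧ (q : ℤ) * m = t + x ↔ x = lowDigit q t ∧ m = carry q t := by
  have hq' : (0 : ℤ) < q := Int.natCast_pos.2 hq
  have hcarry : (q : ℤ) * carry q t = t + lowDigit q t := by
    obtain ⟨c, hc⟩ := dvd_add_lowDigit q t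
    have hnn : 0 ≤ lowDigit q t := (lowDigit_mem_lowAlph hq t).1
    have hc0 : 0 ≤ c := by by_contra! h; nlinarith
    rw [carry, hc, Int.mul_ediv_cancel_left _ hq'.ne', Int.toNat_of_nonneg hc0]
  constructor
  · rintro ⟨hx, hm⟩
    obtain rfl := eq_lowDigit_of_dvd hx ⟨m, hm.symm⟩
    exact ⟨rfl, by exact_mod_cast mul_left_cancel₀ hq'.ne' (hm.trans hcarry.symm)⟩
  · rintro ⟨rfl, rfl⟩
    exact ⟨lowDigit_mem_lowAlph hq t, hcarry⟩

end Carry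

section Run

variable {q : ℕ} (p : ℕ) (d : ℕ → ℤ) (n : ℕ)

def carryRun : ℕ → ℕ
  | 0 => n
  | k + 1 => carry q (p * carryRun k + d k)

theorem existsUnique_lowAlph_run (hq : 0 < q) (hd : ∀ k, 1 - (q : ℤ) ≤ d k) :
    ∃! x : ℕ → ℤ, (∀ k, x k ∈ LowAlph q) ∧
      ∃ s : ℕ → ℕ, s 0 = n ∧ ∀ k, (q : ℤ) * s (k + 1) = p * s k + x k + d k := by
  have step (k m : ℕ) (x : ℤ) (m' : ℕ) :
      x ∈ LowAlph q ∧ (q : ℤ) * m' = p * m + x + d k ↔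
        x = lowDigit q (p * m + d k) ∧ m' = carry q (p * m + d k) := by
    rw [add_right_comm]
    exact lowAlph_step_iff hq (by nlinarith [hd k, Int.natCast_nonneg m]) x m'
  set S := carryRun (q := q) p d n
  refine ⟨fun k => lowDigit q (p * S k + d k), ⟨fun k => ((step k _ _ _).2 ⟨rfl, rfl⟩).1,
    S, rfl, fun k => ((step k _ _ _).2 ⟨rfl, rfl⟩).2⟩, ?_⟩
  rintro x ⟨hx, s, hs0, hs⟩
  have hsS : ∀ k, s k = S k := by
    intro k
    induction k with
    | zero => exact hs0
    | succ k ih => exact ((step k (S k) _ _).1 ⟨hx k, ih ▸ hs k⟩).2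
  funext k
  exact ((step k (S k) _ _).1 ⟨hx k, hsS k ▸ hs k⟩).1

end Run

theorem stmt10_general (p q : ℕ) (hq : 1 < q) (hpq : q < p)
    (n : ℕ) (w : ℕ → ℤ) (hw : ∀ k, w k ∈ LowAlph q) :
    (∃! v : ℕ → ℤ, (∀ k, v k ∈ LowAlph q) ∧
      ∃ s : ℕ → ℕ, s 0 = n ∧
        ∀ k : ℕ, (q : ℤ) * s (k + 1) = p * s k + (v k - w k) + ((p : ℤ) - q)) ∧
    (∃! u : ℕ → ℤ, (∀ k, u k ∈ LowAlph q) ∧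
      ∃ s : ℕ → ℕ, s 0 = n ∧
        ∀ k : ℕ, (q : ℤ) * s (k + 1) = p * s k + (w k - u k) + ((p : ℤ) - q)) := by
  have hq0 : 0 < q := by omega
  have hqp : (q : ℤ) < p := by exact_mod_cast hpq
  constructor
  · convert existsUnique_lowAlph_run p (fun k => p - q - w k) n hq0
      (fun k => by linarith [(hw k).2]) using 7
    congr! 1
    ring
  · let reflect := Equiv.subLeft (fun _ : ℕ => (q : ℤ) - 1)
    rw [← reflect.existsUnique_congr_right]
    refine (existsUnique_congr fun x => ?_).1 <| existsUnique_lowAlph_run p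
      (fun k => w k + p - 2 * q + 1) n hq0 (fun k => by linarith [(hw k).1])
    simp only [reflect, Equiv.subLeft_apply, Pi.sub_apply]
    refine and_congr (forall_congr' fun k => ?_)
      (exists_congr fun s => and_congr_right' (forall_congr' fun k => ?_))
    · simp only [LowAlph, Set.mem_Icc]
      omega
    · congr! 1
      ring

theorem stmt10 (p q : ℕ) (hco : Nat.Coprime p q) (hq : 1 < q) (hpq : q < p)
    (n : ℕ) (w : ℕ → ℤ) (hw : ∀ k, w k ∈ LowAlph q) :
    (∃! v : ℕ → ℤ, (∀ k, v k ∈ LowAlph q) ∧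
      ∃ s : ℕ → ℕ, s 0 = n ∧
        ∀ k : ℕ, (q : ℤ) * s (k + 1) = p * s k + (v k - w k) + ((p : ℤ) - q)) ∧
    (∃! u : ℕ → ℤ, (∀ k, u k ∈ LowAlph q) ∧
      ∃ s : ℕ → ℕ, s 0 = n ∧
        ∀ k : ℕ, (q : ℤ) * s (k + 1) = p * s k + (w k - u k) + ((p : ℤ) - q)) :=
  stmt10_general p q hq hpq n w hw
end

section
/- Let p and q be coprime integers with p > q > 1. For all n, m ∈ ℕ and every i ∈ ℕ: the first i digits of minword(n) and minword(m) coincide if and only if the first i digits of minword(n+1) and minword(m+1) coincide. -/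
/-- Euclidean uniqueness of quotient/remainder. -/
lemma uniq_div (q a b r r' : ℤ) (hq : 0 < q) (hr : 0 ≤ r) (hr2 : r < q)
    (hr' : 0 ≤ r') (hr2' : r' < q) (h : q * a + r = q * b + r') : a = b ∧ r = r' := by
  have hd : q ∣ (r' - r) := ⟨a - b, by have := mul_sub q a b; linarith⟩
  have h0 : r' - r = 0 := Int.eq_zero_of_abs_lt_dvd hd (by rw [abs_lt]; omega)
  have hrr : r = r' := by omega
  have : q * a = q * b := by linarith
  exact ⟨mul_left_cancel₀ hq.ne' this, hrr⟩

theorem stmt11 (p q : ℕ) (hco : Nat.Coprime p q) (hq : 1 < q) (hpq : q < p)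
    (mw : ℕ → ℕ → ℤ)
    (hmw : ∀ n, IsBranch p q (LowAlph q) n (mw n)) :
    ∀ n m i : ℕ,
      (∀ k < i, mw n k = mw m k) ↔ (∀ k < i, mw (n + 1) k = mw (m + 1) k) := by
  classical
  set s : ℕ → ℕ → ℕ := fun n => (hmw n).choose with hsdef
  have hs0 : ∀ n, s n 0 = n := fun n => (hmw n).choose_spec.1
  have hrec : ∀ n k, (q : ℤ) * s n (k + 1) = p * s n k + mw n k ∧ mw n k ∈ LowAlph q :=
    fun n => (hmw n).choose_spec.2
  have hlow : ∀ n k, 0 ≤ mw n k ∧ mw n k ≤ (q : ℤ) - 1 := by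
    intro n k
    have := (hrec n k).2
    simpa [LowAlph, Set.mem_Icc] using this
  set e : ℕ → ℕ → ℤ := fun n k => (s (n + 1) k : ℤ) - s n k with hedef
  have he0 : ∀ n, e n 0 = 1 := by
    intro n; simp [hedef, hs0]
  have herec : ∀ n k, (q : ℤ) * e n (k + 1) = p * e n k + mw (n + 1) k - mw n k := by
    intro n k
    have h1 := (hrec n k).1
    have h2 := (hrec (n + 1) k).1
    have e1 : (q : ℤ) * e n (k + 1) = q * s (n + 1) (k + 1) - q * s n (k + 1) := by
      simp only [hedef]; ring
    have e2 : (p : ℤ) * e n k = p * s (n + 1) k - p * s n k := by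
      simp only [hedef]; ring
    rw [e1, e2]; linarith
  have hqpos : (0 : ℤ) < q := by exact_mod_cast Nat.lt_of_lt_of_le Nat.zero_lt_one hq.le
  have F : ∀ i n m, (∀ k < i, mw n k = mw m k) →
      e n i = e m i ∧ ∀ k < i, mw (n + 1) k = mw (m + 1) k := by
    intro i
    induction i with
    | zero => exact fun n m _ => ⟨by rw [he0, he0], fun k hk => absurd hk (by omega)⟩
    | succ i ih =>
      intro n m h
      obtain ⟨hei, hd⟩ := ih n m (fun k hk => h k (by omega))
      have h1 := herec n i
      have h2 := herec m i
      have hmi : mw m i = mw n i := (h i (by omega)).symm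
      have hpe : (p : ℤ) * e n i = p * e m i := by rw [hei]
      have key : (q : ℤ) * e n (i + 1) + mw (m + 1) i = q * e m (i + 1) + mw (n + 1) i := by
        linarith
      obtain ⟨ha, hb⟩ := uniq_div q (e n (i + 1)) (e m (i + 1)) (mw (m + 1) i) (mw (n + 1) i)
        hqpos (hlow (m + 1) i).1 (by have := (hlow (m + 1) i).2; omega)
        (hlow (n + 1) i).1 (by have := (hlow (n + 1) i).2; omega) key
      refine ⟨ha, fun k hk => ?_⟩
      rcases Nat.lt_succ_iff_lt_or_eq.mp hk with h' | h'
      · exact hd k h'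
      · subst h'; exact hb.symm
  have B : ∀ i n m, (∀ k < i, mw (n + 1) k = mw (m + 1) k) →
      e n i = e m i ∧ ∀ k < i, mw n k = mw m k := by
    intro i
    induction i with
    | zero => exact fun n m _ => ⟨by rw [he0, he0], fun k hk => absurd hk (by omega)⟩
    | succ i ih =>
      intro n m h
      obtain ⟨hei, hd⟩ := ih n m (fun k hk => h k (by omega))
      have h1 := herec n i
      have h2 := herec m i
      have hmi : mw (m + 1) i = mw (n + 1) i := (h i (by omega)).symm
      have hpe : (p : ℤ) * e n i = p * e m i := by rw [hei]
      have key : (q : ℤ) * e n (i + 1) + mw n i = q * e m (i + 1) + mw m i := by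
        linarith
      obtain ⟨ha, hb⟩ := uniq_div q (e n (i + 1)) (e m (i + 1)) (mw n i) (mw m i)
        hqpos (hlow n i).1 (by have := (hlow n i).2; omega)
        (hlow m i).1 (by have := (hlow m i).2; omega) key
      refine ⟨ha, fun k hk => ?_⟩
      rcases Nat.lt_succ_iff_lt_or_eq.mp hk with h' | h'
      · exact hd k h'
      · subst h'; exact hb
  exact fun n m i => ⟨fun h => (F i n m h).2, fun h => (B i n m h).2⟩
end
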